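/- arXiv:0709.3408 — 16 statements merged into one kernel-verified Lean document; each statement's English description precedes it below -/
import Mathlib

section
/- Existence of the dual quadrilateral (Lemma 'dual quad', existence part): Let V be a real vector space, M ∈ V, let e₁, e₂ ∈ V be linearly independent, and let α, β, γ, δ be nonzero real numbers with α ≠ γ and β ≠ δ. Set A = M + αe₁, B = M + βe₂, C = M + γe₁, D = M + δe₂, so that (A,B,C,D) is a planar quadrilateral whose diagonals (AC) and (BD) meet at M. Then the points A* = −e₂/α, B* = −e₁/β, C* = −e₂/γ, D* = −e₁/δ form a quadrilateral dual to (A,B,C,D); explicitly, B* − A* = (αβ)⁻¹(B − A), C* − B* = (βγ)⁻¹(C − B), D* − C* = (γδ)⁻¹(D − C), A* − D* = (δα)⁻¹(A − D), and C* − A* = (α⁻¹ − γ⁻¹)e₂ is a nonzero real multiple of D − B, while D* − B* = (β⁻¹ − δ⁻¹)e₁ is a nonzero real multiple of C − A. -/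
/-- Existence of the dual quadrilateral (explicit construction). -/
theorem dual_quadrilateral_existence
    {V : Type*} [AddCommGroup V] [Module ℝ V]
    (M e₁ e₂ : V) (hlin : LinearIndependent ℝ ![e₁, e₂])
    (α β γ δ : ℝ) (hα : α ≠ 0) (hβ : β ≠ 0) (hγ : γ ≠ 0) (hδ : δ ≠ 0)
    (hαγ : α ≠ γ) (hβδ : β ≠ δ)
    (A B C D Astar Bstar Cstar Dstar : V)
    (hA : A = M + α • e₁) (hB : B = M + β • e₂)
    (hC : C = M + γ • e₁) (hD : D = M + δ • e₂)
    (hAs : Astar = -(α⁻¹ • e₂)) (hBs : Bstar = -(β⁻¹ • e₁))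
    (hCs : Cstar = -(γ⁻¹ • e₂)) (hDs : Dstar = -(δ⁻¹ • e₁)) :
    Bstar - Astar = (α * β)⁻¹ • (B - A) ∧
    Cstar - Bstar = (β * γ)⁻¹ • (C - B) ∧
    Dstar - Cstar = (γ * δ)⁻¹ • (D - C) ∧
    Astar - Dstar = (δ * α)⁻¹ • (A - D) ∧
    Cstar - Astar = (α⁻¹ - γ⁻¹) • e₂ ∧
    (∃ c : ℝ, c ≠ 0 ∧ Cstar - Astar = c • (D - B)) ∧
    Dstar - Bstar = (β⁻¹ - δ⁻¹) • e₁ ∧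
    (∃ c : ℝ, c ≠ 0 ∧ Dstar - Bstar = c • (C - A)) := by
  subst hA hB hC hD hAs hBs hCs hDs
  have hδβ : δ - β ≠ 0 := sub_ne_zero.mpr (Ne.symm hβδ)
  have hγα : γ - α ≠ 0 := sub_ne_zero.mpr (Ne.symm hαγ)
  have hαγ' : α⁻¹ - γ⁻¹ ≠ 0 := sub_ne_zero.mpr fun h => hαγ (inv_injective h)
  have hβδ' : β⁻¹ - δ⁻¹ ≠ 0 := sub_ne_zero.mpr fun h => hβδ (inv_injective h)
  refine ⟨?_, ?_, ?_, ?_, ?_, ⟨(α⁻¹ - γ⁻¹) / (δ - β), div_ne_zero hαγ' hδβ, ?_⟩,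
    ?_, ⟨(β⁻¹ - δ⁻¹) / (γ - α), div_ne_zero hβδ' hγα, ?_⟩⟩ <;>
    match_scalars <;> field_simp <;> ring
end

section
/- Uniqueness of the dual quadrilateral up to scaling and translation (Lemma 'dual quad', uniqueness part): Let V be a real vector space, M ∈ V, let e₁, e₂ ∈ V be linearly independent, let α, β, γ, δ be nonzero real numbers with α ≠ γ and β ≠ δ, and set A = M + αe₁, B = M + βe₂, C = M + γe₁, D = M + δe₂. If (A*,B*,C*,D*) and (A′,B′,C′,D′) are both quadrilaterals dual to (A,B,C,D), then there exist a nonzero real number λ and a vector t ∈ V such that A′ = λA* + t, B′ = λB* + t, C′ = λC* + t, D′ = λD* + t. -/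
/-- Two planar quadrilaterals (A,B,C,D) and (A',B',C',D') are dual:
corresponding sides are parallel and non-corresponding diagonals are parallel. -/
def IsDualQuad {V : Type*} [AddCommGroup V] [Module ℝ V]
    (A B C D A' B' C' D' : V) : Prop :=
  (∃ c : ℝ, c ≠ 0 ∧ B' - A' = c • (B - A)) ∧
  (∃ c : ℝ, c ≠ 0 ∧ C' - B' = c • (C - B)) ∧
  (∃ c : ℝ, c ≠ 0 ∧ D' - C' = c • (D - C)) ∧
  (∃ c : ℝ, c ≠ 0 ∧ A' - D' = c • (A - D)) ∧
  (∃ c : ℝ, c ≠ 0 ∧ C' - A' = c • (D - B)) ∧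
  (∃ c : ℝ, c ≠ 0 ∧ D' - B' = c • (C - A))

/-!
Write the sides of a dual quadrilateral `PQRS` as `c₁ (B - A)`, `c₂ (C - B)`, `c₃ (D - C)`,
`c₄ (A - D)`. Comparing `e₁`- and `e₂`-components in `R - P ∥ D - B = (δ - β) e₂`,
`S - Q ∥ C - A = (γ - α) e₁` and in the closing relation of the four sides gives
`c₂ γ = c₁ α` and `c₄ δ = c₁ β`. Hence `Q - P`, `R - P` and `S - P` are `c₁` times fixed
vectors, and two dual quadrilaterals differ by the homothety of ratio `c₁' / c₁`.
-/

section

variable {V : Type*} [AddCommGroup V] [Module ℝ V]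

lemma exists_homothety_of_sub_eq_smul {u v w P Q R S P' Q' R' S' : V} {c c' : ℝ}
    (hc : c ≠ 0) (hc' : c' ≠ 0)
    (hQ : Q - P = c • u) (hR : R - P = c • v) (hS : S - P = c • w)
    (hQ' : Q' - P' = c' • u) (hR' : R' - P' = c' • v) (hS' : S' - P' = c' • w) :
    ∃ (lam : ℝ) (t : V), lam ≠ 0 ∧
      P' = lam • P + t ∧ Q' = lam • Q + t ∧ R' = lam • R + t ∧ S' = lam • S + t := by
  have hlam : c' / c * c = c' := div_mul_cancel₀ c' hc
  refine ⟨c' / c, P' - (c' / c) • P, div_ne_zero hc' hc, by abel, ?_, ?_, ?_⟩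
  · linear_combination (norm := module) hQ' - (c' / c) • hQ - hlam • u
  · linear_combination (norm := module) hR' - (c' / c) • hR - hlam • v
  · linear_combination (norm := module) hS' - (c' / c) • hS - hlam • w

lemma IsDualQuad.side_coeff_relations {M e₁ e₂ A B C D P Q R S : V} {α β γ δ : ℝ}
    (hlin : LinearIndependent ℝ ![e₁, e₂])
    (hA : A = M + α • e₁) (hB : B = M + β • e₂) (hC : C = M + γ • e₁) (hD : D = M + δ • e₂)
    (h : IsDualQuad A B C D P Q R S) :
    ∃ c₁ c₂ c₄ : ℝ, c₁ ≠ 0 ∧ Q - P = c₁ • (B - A) ∧ R - Q = c₂ • (C - B) ∧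
      P - S = c₄ • (A - D) ∧ c₂ * γ = c₁ * α ∧ c₄ * δ = c₁ * β := by
  obtain ⟨⟨c₁, hc₁, hQP⟩, ⟨c₂, -, hRQ⟩, ⟨c₃, -, hSR⟩, ⟨c₄, -, hPS⟩,
    ⟨c₅, -, hRP⟩, ⟨c₆, -, hSQ⟩⟩ := h
  refine ⟨c₁, c₂, c₄, hc₁, hQP, hRQ, hPS, ?_⟩
  have hpair := LinearIndependent.pair_iff.mp hlin
  subst hA hB hC hD
  obtain ⟨h₂₁, -⟩ := hpair (c₂ * γ - c₁ * α) ((c₁ - c₂) * β - c₅ * (δ - β)) (by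
    linear_combination (norm := module) hRP - hRQ - hQP)
  obtain ⟨-, h₃₂⟩ := hpair ((c₂ - c₃) * γ - c₆ * (γ - α)) (c₃ * δ - c₂ * β) (by
    linear_combination (norm := module) hSQ - hRQ - hSR)
  obtain ⟨-, hclose⟩ := hpair (c₂ * γ - c₃ * γ + (c₄ - c₁) * α) ((c₁ - c₂) * β + (c₃ - c₄) * δ)
    (by linear_combination (norm := module) -hQP - hRQ - hSR - hPS)
  exact ⟨by linear_combination h₂₁, by linear_combination h₃₂ - hclose⟩

lemma IsDualQuad.sub_eq_smul {M e₁ e₂ A B C D P Q R S : V} {α β γ δ : ℝ}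
    (hlin : LinearIndependent ℝ ![e₁, e₂]) (hγ : γ ≠ 0) (hδ : δ ≠ 0)
    (hA : A = M + α • e₁) (hB : B = M + β • e₂) (hC : C = M + γ • e₁) (hD : D = M + δ • e₂)
    (h : IsDualQuad A B C D P Q R S) :
    ∃ c : ℝ, c ≠ 0 ∧ Q - P = c • (B - A) ∧ R - P = c • ((B - A) + (α / γ) • (C - B)) ∧
      S - P = c • ((β / δ) • (D - A)) := by
  obtain ⟨c₁, c₂, c₄, hc₁, hQP, hRQ, hPS, h₂, h₄⟩ := h.side_coeff_relations hlin hA hB hC hD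
  have hc₂ : c₂ = c₁ * (α / γ) := by rw [mul_div_assoc', eq_div_iff hγ, h₂]
  have hc₄ : c₄ = c₁ * (β / δ) := by rw [mul_div_assoc', eq_div_iff hδ, h₄]
  rw [hc₂] at hRQ
  rw [hc₄] at hPS
  refine ⟨c₁, hc₁, hQP, ?_, ?_⟩
  · linear_combination (norm := module) hRQ + hQP
  · linear_combination (norm := module) -hPS

end

theorem dual_quadrilateral_uniqueness_general
    {V : Type*} [AddCommGroup V] [Module ℝ V]
    (M e₁ e₂ : V) (hlin : LinearIndependent ℝ ![e₁, e₂])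
    (α β γ δ : ℝ) (hγ : γ ≠ 0) (hδ : δ ≠ 0)
    (A B C D : V)
    (hA : A = M + α • e₁) (hB : B = M + β • e₂)
    (hC : C = M + γ • e₁) (hD : D = M + δ • e₂)
    (Astar Bstar Cstar Dstar A' B' C' D' : V)
    (h1 : IsDualQuad A B C D Astar Bstar Cstar Dstar)
    (h2 : IsDualQuad A B C D A' B' C' D') :
    ∃ (lam : ℝ) (t : V), lam ≠ 0 ∧
      A' = lam • Astar + t ∧ B' = lam • Bstar + t ∧
      C' = lam • Cstar + t ∧ D' = lam • Dstar + t := by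
  obtain ⟨c, hc, hB₁, hC₁, hD₁⟩ := h1.sub_eq_smul hlin hγ hδ hA hB hC hD
  obtain ⟨c', hc', hB₂, hC₂, hD₂⟩ := h2.sub_eq_smul hlin hγ hδ hA hB hC hD
  exact exists_homothety_of_sub_eq_smul hc hc' hB₁ hC₁ hD₁ hB₂ hC₂ hD₂

/-- Uniqueness of the dual quadrilateral up to scaling and translation. -/
theorem dual_quadrilateral_uniqueness
    {V : Type*} [AddCommGroup V] [Module ℝ V]
    (M e₁ e₂ : V) (hlin : LinearIndependent ℝ ![e₁, e₂])
    (α β γ δ : ℝ) (hα : α ≠ 0) (hβ : β ≠ 0) (hγ : γ ≠ 0) (hδ : δ ≠ 0)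
    (hαγ : α ≠ γ) (hβδ : β ≠ δ)
    (A B C D : V)
    (hA : A = M + α • e₁) (hB : B = M + β • e₂)
    (hC : C = M + γ • e₁) (hD : D = M + δ • e₂)
    (Astar Bstar Cstar Dstar A' B' C' D' : V)
    (h1 : IsDualQuad A B C D Astar Bstar Cstar Dstar)
    (h2 : IsDualQuad A B C D A' B' C' D') :
    ∃ (lam : ℝ) (t : V), lam ≠ 0 ∧
      A' = lam • Astar + t ∧ B' = lam • Bstar + t ∧
      C' = lam • Cstar + t ∧ D' = lam • Dstar + t :=
  dual_quadrilateral_uniqueness_general M e₁ e₂ hlin α β γ δ hγ hδ A B C D hA hB hC hD Astar Bstar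
    Cstar Dstar A' B' C' D' h1 h2
end

section
/- Generalized Menelaus theorem: Let n ≥ 1 and let P₁, …, P_{n+1} be affinely independent points in ℝⁿ (so their affine span is all of ℝⁿ). For each i = 1, …, n+1 let ξᵢ ∈ ℝ with ξᵢ ≠ 0 and ξᵢ ≠ 1, and define P_{i,i+1} = (1 − ξᵢ)Pᵢ + ξᵢP_{i+1}, where indices are read modulo n+1 (so P_{n+2} = P₁). Then the n+1 points P_{1,2}, P_{2,3}, …, P_{n+1,1} lie in an affine subspace of dimension at most n−1 if and only if ∏_{i=1}^{n+1} ξᵢ/(1 − ξᵢ) = (−1)^{n+1}. -/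
/-!
An affine relation `∑ w j • Q j = 0`, `∑ w j = 0` among the points
`Q j = (1 - ξ j) • P j + ξ j • P (j + 1)` is a relation among the `P`'s with coefficient
`(1 - ξ (j + 1)) * w (j + 1) + ξ j * w j` at `P (j + 1)`, and these coefficients again sum to
`∑ w j`. As the `P`'s are affinely independent, the `Q`'s are dependent exactly when the cyclic
recurrence `(1 - ξ (j + 1)) * w (j + 1) = -ξ j * w j` has a nonzero solution. Such a solution
vanishes nowhere, and multiplying the recurrence around the cycle shows that it exists iff
`∏ (1 - ξ j) = ∏ (-ξ j)`, i.e. `∏ ξ j / (1 - ξ j) = (-1) ^ (n + 1)`.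
-/

open Finset

theorem Fin.partialProd_last {M : Type*} [Monoid M] {n : ℕ} (f : Fin n → M) :
    Fin.partialProd f (Fin.last n) = (List.ofFn f).prod := by
  simp [Fin.partialProd, List.take_of_length_le]

theorem Fin.prod_comp_add_one {M : Type*} [CommMonoid M] {n : ℕ} (f : Fin (n + 1) → M) :
    ∏ j, f (j + 1) = ∏ j, f j :=
  Equiv.prod_comp (Equiv.addRight 1) f

theorem Fin.sum_comp_add_one {M : Type*} [AddCommMonoid M] {n : ℕ} (f : Fin (n + 1) → M) :
    ∑ j, f (j + 1) = ∑ j, f j :=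
  Equiv.sum_comp (Equiv.addRight 1) f

open Fin.NatCast in
theorem Fin.forall_of_imp_add_one {n : ℕ} {p : Fin (n + 1) → Prop} (h : ∀ i, p i → p (i + 1))
    {j : Fin (n + 1)} (hj : p j) (i : Fin (n + 1)) : p i := by
  have hk : ∀ k : ℕ, p (j + k) := by
    intro k
    induction k with
    | zero => simpa using hj
    | succ k ih => simpa [← add_assoc] using h _ ih
  simpa using hk (i - j).val

section CyclicRecurrence

variable {K : Type*} [Field K] {n : ℕ} {a b : Fin (n + 1) → K}

theorem prod_eq_prod_of_cyclic_recurrence (ha : ∀ j, a j ≠ 0) {w : Fin (n + 1) → K}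
    (hw : w ≠ 0) (hrec : ∀ j, a (j + 1) * w (j + 1) = b j * w j) : ∏ j, a j = ∏ j, b j := by
  have hw_ne : ∀ j, w j ≠ 0 := by
    intro j hj
    refine hw (funext (Fin.forall_of_imp_add_one (fun i hi => ?_) hj))
    simpa [hi, ha] using hrec i
  have hprod : (∏ j, a j) * ∏ j, w j = (∏ j, b j) * ∏ j, w j := by
    calc (∏ j, a j) * ∏ j, w j = ∏ j, a (j + 1) * w (j + 1) := by
          rw [← prod_mul_distrib, Fin.prod_comp_add_one fun j => a j * w j]
      _ = (∏ j, b j) * ∏ j, w j := by simp only [hrec, prod_mul_distrib]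
  exact mul_right_cancel₀ (prod_ne_zero_iff.2 fun j _ => hw_ne j) hprod

theorem exists_cyclic_recurrence_of_prod_eq (ha : ∀ j, a j ≠ 0) (hab : ∏ j, a j = ∏ j, b j) :
    ∃ w : Fin (n + 1) → K, w ≠ 0 ∧ ∀ j, a (j + 1) * w (j + 1) = b j * w j := by
  -- solve the recurrence from `w 0 = 1` along `0, 1, …, last n`; `hab` closes the cycle
  refine ⟨Fin.partialProd fun i : Fin n => b i.castSucc / a i.succ,
    fun h => by simpa using congr_fun h 0, Fin.lastCases ?_ fun i => ?_⟩
  · rw [Fin.prod_univ_succ, Fin.prod_univ_castSucc] at hab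
    rw [Fin.last_add_one, Fin.partialProd_zero, Fin.partialProd_last, List.prod_ofFn,
      prod_div_distrib, mul_one, ← mul_div_assoc,
      eq_div_iff (prod_ne_zero_iff.2 fun i _ => ha _)]
    linear_combination hab
  · rw [Fin.coeSucc_eq_succ, Fin.partialProd_succ]
    field_simp [ha]

theorem exists_cyclic_recurrence_iff (ha : ∀ j, a j ≠ 0) :
    (∃ w : Fin (n + 1) → K, w ≠ 0 ∧ ∀ j, a (j + 1) * w (j + 1) = b j * w j) ↔
      ∏ j, a j = ∏ j, b j :=
  ⟨fun ⟨_, hw, hrec⟩ => prod_eq_prod_of_cyclic_recurrence ha hw hrec,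
    exists_cyclic_recurrence_of_prod_eq ha⟩

end CyclicRecurrence

theorem prod_one_sub_eq_prod_neg_iff {ι K : Type*} [Fintype ι] [Field K] {ξ : ι → K}
    (h1 : ∀ i, ξ i ≠ 1) :
    ∏ i, (1 - ξ i) = ∏ i, -ξ i ↔ ∏ i, ξ i / (1 - ξ i) = (-1) ^ Fintype.card ι := by
  have hsq : ((-1 : K) ^ Fintype.card ι) * (-1) ^ Fintype.card ι = 1 := by
    rw [← mul_pow, neg_one_mul, neg_neg, one_pow]
  rw [prod_neg, prod_div_distrib, card_univ,
    div_eq_iff (prod_ne_zero_iff.2 fun i _ => sub_ne_zero.2 (h1 i).symm)]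
  constructor <;> intro h <;> rw [h, ← mul_assoc, hsq, one_mul]

theorem not_affineIndependent_iff_exists_sum_eq_zero {K V ι : Type*} [Ring K] [AddCommGroup V]
    [Module K V] [Fintype ι] {p : ι → V} :
    ¬AffineIndependent K p ↔ ∃ w : ι → K, w ≠ 0 ∧ ∑ i, w i = 0 ∧ ∑ i, w i • p i = 0 := by
  constructor
  · intro h
    rw [affineIndependent_iff_of_fintype] at h
    push Not at h
    obtain ⟨w, hw, hv, i, hi⟩ := h
    rw [weightedVSub_eq_linear_combination _ hw] at hv
    exact ⟨w, fun h => hi (congr_fun h i), hw, hv⟩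
  · rintro ⟨w, hw0, hw, hv⟩ hp
    exact hw0 (funext fun i => hp.eq_zero_of_sum_eq_zero hw hv i (mem_univ i))

section Menelaus

variable {K V : Type*} [CommRing K] [AddCommGroup V] [Module K V] {n : ℕ}

theorem sum_menelaus_weights (ξ w : Fin (n + 1) → K) :
    ∑ j, ((1 - ξ (j + 1)) * w (j + 1) + ξ j * w j) = ∑ j, w j := by
  rw [sum_add_distrib, Fin.sum_comp_add_one fun j => (1 - ξ j) * w j,
    ← sum_add_distrib]
  exact sum_congr rfl fun j _ => by ring

theorem sum_smul_menelaus_points (P : Fin (n + 1) → V) (ξ w : Fin (n + 1) → K) :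
    ∑ j, w j • ((1 - ξ j) • P j + ξ j • P (j + 1)) =
      ∑ j, ((1 - ξ (j + 1)) * w (j + 1) + ξ j * w j) • P (j + 1) := by
  simp only [add_smul, smul_add, smul_smul, sum_add_distrib]
  rw [Fin.sum_comp_add_one fun j => ((1 - ξ j) * w j) • P j]
  simp only [mul_comm (w _)]

theorem not_affineIndependent_menelaus_iff {P : Fin (n + 1) → V} (ξ : Fin (n + 1) → K)
    (hP : AffineIndependent K P) :
    ¬AffineIndependent K (fun j => (1 - ξ j) • P j + ξ j • P (j + 1)) ↔
      ∃ w : Fin (n + 1) → K, w ≠ 0 ∧ ∀ j, (1 - ξ (j + 1)) * w (j + 1) = -ξ j * w j := by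
  rw [not_affineIndependent_iff_exists_sum_eq_zero]
  refine exists_congr fun w => and_congr_right fun _ => ?_
  rw [← sum_menelaus_weights ξ w, sum_smul_menelaus_points]
  constructor
  · rintro ⟨hsum, hcomb⟩ j
    have hP' := hP.comp_embedding (Equiv.addRight 1).toEmbedding
    linear_combination hP'.eq_zero_of_sum_eq_zero hsum hcomb j (mem_univ j)
  · intro h
    simp [h]

end Menelaus

theorem generalized_menelaus_general (n : ℕ) (hn : 1 ≤ n)
    (P : Fin (n + 1) → EuclideanSpace ℝ (Fin n))
    (hP : AffineIndependent ℝ P)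
    (ξ : Fin (n + 1) → ℝ) (h1 : ∀ i, ξ i ≠ 1)
    (Q : Fin (n + 1) → EuclideanSpace ℝ (Fin n))
    (hQ : ∀ i, Q i = (1 - ξ i) • P i + ξ i • P (i + 1)) :
    Module.finrank ℝ (vectorSpan ℝ (Set.range Q)) ≤ n - 1 ↔
      (∏ i, ξ i / (1 - ξ i)) = (-1 : ℝ) ^ (n + 1) := by
  obtain rfl : Q = fun i => (1 - ξ i) • P i + ξ i • P (i + 1) := funext hQ
  rw [finrank_vectorSpan_le_iff_not_affineIndependent ℝ _ (n := n - 1) (by rw [Fintype.card_fin]; omega),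
    not_affineIndependent_menelaus_iff ξ hP,
    exists_cyclic_recurrence_iff fun i => sub_ne_zero.2 (h1 i).symm,
    prod_one_sub_eq_prod_neg_iff h1, Fintype.card_fin]

/-- Generalized Menelaus theorem: `n+1` affinely independent points in `ℝⁿ`,
with a point `Q i` chosen on each line `(P i, P (i+1))` (indices mod `n+1`),
dividing it in the ratio `ξ i / (1 - ξ i)`.  The points `Q i` lie in an
affine subspace of dimension at most `n - 1` iff the product of the ratios
equals `(-1)^(n+1)`. -/
theorem generalized_menelaus (n : ℕ) (hn : 1 ≤ n)
    (P : Fin (n + 1) → EuclideanSpace ℝ (Fin n))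
    (hP : AffineIndependent ℝ P)
    (ξ : Fin (n + 1) → ℝ) (h0 : ∀ i, ξ i ≠ 0) (h1 : ∀ i, ξ i ≠ 1)
    (Q : Fin (n + 1) → EuclideanSpace ℝ (Fin n))
    (hQ : ∀ i, Q i = (1 - ξ i) • P i + ξ i • P (i + 1)) :
    Module.finrank ℝ (vectorSpan ℝ (Set.range Q)) ≤ n - 1 ↔
      (∏ i, ξ i / (1 - ξ i)) = (-1 : ℝ) ^ (n + 1) :=
  generalized_menelaus_general n hn P hP ξ h1 Q hQ
end

section
/- Characterization of two-dimensional discrete Koenigs nets via intersection points of diagonals (Theorem 'Discrete 2d Koenigs nets; characterization in terms of intersection points of diagonals', local form): Let N ≥ 3 and let f, f₁, f₂, f₋₁, f₋₂ ∈ ℝᴺ be such that f₁, f₂, f₋₁, f₋₂ are affinely independent. Let f₁₂, f₋₁,₂, f₋₁,₋₂, f₁,₋₂ ∈ ℝᴺ be points such that each of the four quadruples (f, f₁, f₁₂, f₂), (f, f₂, f₋₁,₂, f₋₁), (f, f₋₁, f₋₁,₋₂, f₋₂), (f, f₋₂, f₁,₋₂, f₁) lies in a common plane, and suppose the diagonals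 of each quadrilateral intersect: there exist points M₁, M₂, M₃, M₄ and scalars ξ₁, ξ₂, ξ₃, ξ₄ ∈ ℝ \ {0,1} with M₁ = (1−ξ₁)f₁ + ξ₁f₂ lying on the line through f and f₁₂, M₂ = (1−ξ₂)f₂ + ξ₂f₋₁ lying on the line through f and f₋₁,₂, M₃ = (1−ξ₃)f₋₁ + ξ₃f₋₂ lying on the line through f and f₋₁,₋₂, and M₄ = (1−ξ₄)f₋₂ + ξ₄f₁ lying on the line through f and f₁,₋₂. Then M₁, M₂, M₃, M₄ lie in an affine subspace of dimension at most 2 if and only if ∏_{k=1}^{4} ξ_k/(1 − ξ_k) = 1. -/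
set_option maxHeartbeats 1000000 in
/-- Characterization of two-dimensional discrete Koenigs nets via the
intersection points of the diagonals of the four quadrilaterals adjacent
to a vertex `f`. -/
theorem koenigs_2d_diagonal_points (N : ℕ) (hN : 3 ≤ N)
    (f f₁ f₂ fm1 fm2 f₁₂ fm1_2 fm1m2 f1m2 : EuclideanSpace ℝ (Fin N))
    (hind : AffineIndependent ℝ ![f₁, f₂, fm1, fm2])
    (hc1 : Coplanar ℝ ({f, f₁, f₁₂, f₂} : Set (EuclideanSpace ℝ (Fin N))))
    (hc2 : Coplanar ℝ ({f, f₂, fm1_2, fm1} : Set (EuclideanSpace ℝ (Fin N))))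
    (hc3 : Coplanar ℝ ({f, fm1, fm1m2, fm2} : Set (EuclideanSpace ℝ (Fin N))))
    (hc4 : Coplanar ℝ ({f, fm2, f1m2, f₁} : Set (EuclideanSpace ℝ (Fin N))))
    (ξ₁ ξ₂ ξ₃ ξ₄ : ℝ)
    (hξ₁0 : ξ₁ ≠ 0) (hξ₂0 : ξ₂ ≠ 0) (hξ₃0 : ξ₃ ≠ 0) (hξ₄0 : ξ₄ ≠ 0)
    (hξ₁1 : ξ₁ ≠ 1) (hξ₂1 : ξ₂ ≠ 1) (hξ₃1 : ξ₃ ≠ 1) (hξ₄1 : ξ₄ ≠ 1)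
    (M₁ M₂ M₃ M₄ : EuclideanSpace ℝ (Fin N))
    (hM₁ : M₁ = (1 - ξ₁) • f₁ + ξ₁ • f₂)
    (hM₁' : M₁ ∈ affineSpan ℝ ({f, f₁₂} : Set (EuclideanSpace ℝ (Fin N))))
    (hM₂ : M₂ = (1 - ξ₂) • f₂ + ξ₂ • fm1)
    (hM₂' : M₂ ∈ affineSpan ℝ ({f, fm1_2} : Set (EuclideanSpace ℝ (Fin N))))
    (hM₃ : M₃ = (1 - ξ₃) • fm1 + ξ₃ • fm2)
    (hM₃' : M₃ ∈ affineSpan ℝ ({f, fm1m2} : Set (EuclideanSpace ℝ (Fin N))))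
    (hM₄ : M₄ = (1 - ξ₄) • fm2 + ξ₄ • f₁)
    (hM₄' : M₄ ∈ affineSpan ℝ ({f, f1m2} : Set (EuclideanSpace ℝ (Fin N)))) :
    Coplanar ℝ ({M₁, M₂, M₃, M₄} : Set (EuclideanSpace ℝ (Fin N))) ↔
      (ξ₁ / (1 - ξ₁)) * (ξ₂ / (1 - ξ₂)) * (ξ₃ / (1 - ξ₃)) * (ξ₄ / (1 - ξ₄)) = 1 := by
  subst hM₁ hM₂ hM₃ hM₄
  have h1 : (1:ℝ) - ξ₁ ≠ 0 := sub_ne_zero.2 fun h => hξ₁1 h.symm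
  have h2 : (1:ℝ) - ξ₂ ≠ 0 := sub_ne_zero.2 fun h => hξ₂1 h.symm
  have h3 : (1:ℝ) - ξ₃ ≠ 0 := sub_ne_zero.2 fun h => hξ₃1 h.symm
  have h4 : (1:ℝ) - ξ₄ ≠ 0 := sub_ne_zero.2 fun h => hξ₄1 h.symm
  set A := (1 - ξ₁) • f₁ + ξ₁ • f₂ with hA
  set B := (1 - ξ₂) • f₂ + ξ₂ • fm1 with hB
  set C := (1 - ξ₃) • fm1 + ξ₃ • fm2 with hC
  set D := (1 - ξ₄) • fm2 + ξ₄ • f₁ with hD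
  have hrange : ({A, B, C, D} : Set (EuclideanSpace ℝ (Fin N))) = Set.range ![A, B, C, D] := by
    ext x
    simp [Matrix.range_cons, Matrix.range_empty]
    tauto
  have hcop : Coplanar ℝ ({A, B, C, D} : Set (EuclideanSpace ℝ (Fin N))) ↔
      ¬ AffineIndependent ℝ ![A, B, C, D] := by
    rw [hrange, coplanar_iff_finrank_le_two,
      finrank_vectorSpan_le_iff_not_affineIndependent ℝ _ (by simp : Fintype.card (Fin 4) = 2 + 2)]
  rw [hcop]
  constructor
  · intro hna
    rw [affineIndependent_iff] at hna
    push_neg at hna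
    obtain ⟨s, w, hw0, hwp, i, his, hwi⟩ := hna
    set w' : Fin 4 → ℝ := fun j => if j ∈ s then w j else 0 with hw'
    have hw'0 : ∑ j, w' j = 0 := by
      rw [hw']; simp only [Finset.sum_ite_mem, Finset.univ_inter]; exact hw0
    have hw'p : ∑ j, w' j • (![A, B, C, D] j) = 0 := by
      rw [hw']
      simp only [ite_smul, zero_smul, Finset.sum_ite_mem, Finset.univ_inter]
      exact hwp
    have hwi' : w' i ≠ 0 := by rw [hw']; simp [his]; exact hwi
    set a := w' 0; set b := w' 1; set c := w' 2; set d := w' 3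
    rw [Fin.sum_univ_four] at hw'0 hw'p
    simp only [Matrix.cons_val_zero, Matrix.cons_val_one, Matrix.head_cons,
      Matrix.cons_val_two, Matrix.tail_cons, Matrix.cons_val_three] at hw'p
    -- coefficients w.r.t. f's
    have hzero : ∀ e ∈ Finset.univ, (![a * (1 - ξ₁) + d * ξ₄, a * ξ₁ + b * (1 - ξ₂),
        b * ξ₂ + c * (1 - ξ₃), c * ξ₃ + d * (1 - ξ₄)] : Fin 4 → ℝ) e = 0 := by
      apply affineIndependent_iff.1 hind
      · rw [Fin.sum_univ_four]
        simp only [Matrix.cons_val_zero, Matrix.cons_val_one, Matrix.head_cons,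
          Matrix.cons_val_two, Matrix.tail_cons, Matrix.cons_val_three]
        linarith [hw'0]
      · rw [Fin.sum_univ_four]
        simp only [Matrix.cons_val_zero, Matrix.cons_val_one, Matrix.head_cons,
          Matrix.cons_val_two, Matrix.tail_cons, Matrix.cons_val_three]
        rw [hA, hB, hC, hD] at hw'p
        linear_combination (norm := module) hw'p
    have e1 : a * (1 - ξ₁) + d * ξ₄ = 0 := by simpa using hzero 0 (Finset.mem_univ 0)
    have e2 : a * ξ₁ + b * (1 - ξ₂) = 0 := by simpa using hzero 1 (Finset.mem_univ 1)
    have e3 : b * ξ₂ + c * (1 - ξ₃) = 0 := by simpa using hzero 2 (Finset.mem_univ 2)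
    have e4 : c * ξ₃ + d * (1 - ξ₄) = 0 := by simpa using hzero 3 (Finset.mem_univ 3)
    have ha : a ≠ 0 := by
      fin_cases i
      · exact hwi'
      · intro ha0
        apply hwi'
        have : b * (1 - ξ₂) = 0 := by rw [ha0] at e2; linarith
        exact (mul_eq_zero.1 this).resolve_right h2
      · intro ha0
        apply hwi'
        have hb : b = 0 := by
          have : b * (1 - ξ₂) = 0 := by rw [ha0] at e2; linarith
          exact (mul_eq_zero.1 this).resolve_right h2
        have : c * (1 - ξ₃) = 0 := by rw [hb] at e3; linarith
        exact (mul_eq_zero.1 this).resolve_right h3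
      · intro ha0
        apply hwi'
        have hb : b = 0 := by
          have : b * (1 - ξ₂) = 0 := by rw [ha0] at e2; linarith
          exact (mul_eq_zero.1 this).resolve_right h2
        have hc : c = 0 := by
          have : c * (1 - ξ₃) = 0 := by rw [hb] at e3; linarith
          exact (mul_eq_zero.1 this).resolve_right h3
        have : d * (1 - ξ₄) = 0 := by rw [hc] at e4; linarith
        exact (mul_eq_zero.1 this).resolve_right h4
    have hb : b ≠ 0 := fun hb0 => ha (by
      have : a * ξ₁ = 0 := by rw [hb0] at e2; linarith
      exact (mul_eq_zero.1 this).resolve_right hξ₁0)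
    have hc : c ≠ 0 := fun hc0 => hb (by
      have : b * ξ₂ = 0 := by rw [hc0] at e3; linarith
      exact (mul_eq_zero.1 this).resolve_right hξ₂0)
    have hd : d ≠ 0 := fun hd0 => hc (by
      have : c * ξ₃ = 0 := by rw [hd0] at e4; linarith
      exact (mul_eq_zero.1 this).resolve_right hξ₃0)
    have key : ξ₁ * ξ₂ * ξ₃ * ξ₄ = (1 - ξ₁) * (1 - ξ₂) * (1 - ξ₃) * (1 - ξ₄) := by
      have habcd : a * b * c * d ≠ 0 := by
        simp [mul_ne_zero, ha, hb, hc, hd]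
      have q1 : d * ξ₄ = -(a * (1 - ξ₁)) := by linarith
      have q2 : a * ξ₁ = -(b * (1 - ξ₂)) := by linarith
      have q3 : b * ξ₂ = -(c * (1 - ξ₃)) := by linarith
      have q4 : c * ξ₃ = -(d * (1 - ξ₄)) := by linarith
      have h : (a * ξ₁) * (b * ξ₂) * (c * ξ₃) * (d * ξ₄) =
          (-(b * (1 - ξ₂))) * (-(c * (1 - ξ₃))) * (-(d * (1 - ξ₄))) * (-(a * (1 - ξ₁))) := by
        rw [q2, q3, q4, q1]
      apply mul_left_cancel₀ habcd
      linear_combination h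
    field_simp
    linear_combination key
  · intro hprod hai
    have key : ξ₁ * ξ₂ * ξ₃ * ξ₄ = (1 - ξ₁) * (1 - ξ₂) * (1 - ξ₃) * (1 - ξ₄) := by
      field_simp at hprod
      linear_combination hprod
    set w : Fin 4 → ℝ := ![(1 - ξ₂) * (1 - ξ₃) * (1 - ξ₄), -(ξ₁ * (1 - ξ₃) * (1 - ξ₄)),
      ξ₁ * ξ₂ * (1 - ξ₄), -(ξ₁ * ξ₂ * ξ₃)] with hw
    have h0 := affineIndependent_iff.1 hai Finset.univ w ?_ ?_ 0 (Finset.mem_univ 0)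
    · rw [hw] at h0
      simp only [Matrix.cons_val_zero] at h0
      exact (mul_ne_zero (mul_ne_zero h2 h3) h4) h0
    · rw [hw, Fin.sum_univ_four]
      simp only [Matrix.cons_val_zero, Matrix.cons_val_one, Matrix.head_cons,
        Matrix.cons_val_two, Matrix.tail_cons, Matrix.cons_val_three]
      linear_combination (-1 : ℝ) * key
    · rw [hw, Fin.sum_univ_four]
      simp only [Matrix.cons_val_zero, Matrix.cons_val_one, Matrix.head_cons,
        Matrix.cons_val_two, Matrix.tail_cons, Matrix.cons_val_three,
        hA, hB, hC, hD]
      match_scalars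
      all_goals first | ring1 | linear_combination (-1 : ℝ) * key | linear_combination key
end

section
/- Algebraic characterization of simultaneous dualizability of a vertex star (Theorem 'Algebraic characterization of discrete Koenigs nets', m = 2 local form): Let V be a real vector space and let f together with f₁, f₂, f₋₁, f₋₂ and f₁₂, f₋₁,₂, f₋₁,₋₂, f₁,₋₂ form four planar quadrilaterals Q₁ = (f, f₁, f₁₂, f₂), Q₂ = (f, f₂, f₋₁,₂, f₋₁), Q₃ = (f, f₋₁, f₋₁,₋₂, f₋₂), Q₄ = (f, f₋₂, f₁,₋₂, f₁), each with pairwise distinct vertices no three of which are collinear, and each having its two diagonals intersect in a point M_k distinct from the vertices. Let σ₁ = l(M₁,f₂)/l(M₁,f₁), σ₂ = l(M₂,f₋₁)/l(M₂,f₂), σ₃ = l(M₃,f₋₂)/l(M₃,f₋₁), σ₄ = l(M₄,f₁)/l(M₄,f₋₂) be the ratios of directed lengths in which M_k divides the diagonal of Q_k not passing through f. Then there exist points g, g₁, g₂, g₋₁, g₋₂, g₁₂, g₋₁,₂, g₋₁,₋₂, g₁,₋₂ in V such that each quadrilateral (g, g_i, g_{ij}, g_j) is dual to the corresponding quadrilateral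 (f, f_i, f_{ij}, f_j) (with all parallelism factors nonzero), if and only if σ₁σ₂σ₃σ₄ = 1. -/
/-- A nondegenerate planar quadrilateral: pairwise distinct vertices,
no three of which are collinear, lying in a common plane. -/
def NondegQuad {V : Type*} [AddCommGroup V] [Module ℝ V] (A B C D : V) : Prop :=
  A ≠ B ∧ A ≠ C ∧ A ≠ D ∧ B ≠ C ∧ B ≠ D ∧ C ≠ D ∧
  ¬ Collinear ℝ ({A, B, C} : Set V) ∧ ¬ Collinear ℝ ({A, B, D} : Set V) ∧
  ¬ Collinear ℝ ({A, C, D} : Set V) ∧ ¬ Collinear ℝ ({B, C, D} : Set V) ∧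
  Coplanar ℝ ({A, B, C, D} : Set V)

/-- `M` is the intersection point of the diagonals of the quadrilateral
(A,B,C,D), distinct from the vertices. -/
def DiagIntersection {V : Type*} [AddCommGroup V] [Module ℝ V] (A B C D M : V) : Prop :=
  M ∈ affineSpan ℝ ({A, C} : Set V) ∧ M ∈ affineSpan ℝ ({B, D} : Set V) ∧
  M ≠ A ∧ M ≠ B ∧ M ≠ C ∧ M ≠ D

section Helpers

variable {V : Type*} [AddCommGroup V] [Module ℝ V]

/-- σ is nonzero and ≠ 1. -/
lemma KD_sigma (B D M : V) (σ : ℝ) (hσ : D - M = σ • (B - M))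
    (hMD : M ≠ D) (hBD : B ≠ D) : σ ≠ 0 ∧ σ ≠ 1 := by
  constructor
  · rintro rfl
    rw [zero_smul] at hσ
    exact hMD (sub_eq_zero.mp hσ).symm
  · rintro rfl
    rw [one_smul] at hσ
    exact hBD (sub_left_inj.mp hσ).symm

/-- Extract the ratio α on the diagonal through A. -/
lemma KD_alpha (A C M : V) (hM : M ∈ affineSpan ℝ ({A, C} : Set V))
    (hMA : M ≠ A) (hMC : M ≠ C) :
    ∃ α : ℝ, α ≠ 0 ∧ α ≠ 1 ∧ C - M = α • (A - M) := by
  have h : (M - A) +ᵥ A ∈ affineSpan ℝ ({A, C} : Set V) := by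
    simpa [vadd_eq_add] using hM
  rw [vadd_left_mem_affineSpan_pair] at h
  obtain ⟨s, hs⟩ := h
  have hs' : s • (C - A) = M - A := by simpa [vsub_eq_sub] using hs
  have hs0 : s ≠ 0 := by
    rintro rfl
    rw [zero_smul] at hs'
    exact hMA (sub_eq_zero.mp hs'.symm)
  have hs1 : s ≠ 1 := by
    rintro rfl
    rw [one_smul] at hs'
    have : C = M := by linear_combination (norm := module) hs'
    exact hMC this.symm
  have hs1' : s - 1 ≠ 0 := sub_ne_zero.mpr hs1
  refine ⟨(s - 1) / s, div_ne_zero hs1' hs0, ?_, ?_⟩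
  · intro h1
    rw [div_eq_one_iff_eq hs0] at h1
    linarith
  · have hAM : A - M = (-s) • (C - A) := by
      linear_combination (norm := module) hs'
    have hCM : C - M = (1 - s) • (C - A) := by
      linear_combination (norm := module) hs'
    rw [hAM, hCM, smul_smul]
    congr 1
    field_simp
    ring

/-- Independence of A - M and B - M from non-collinearity. -/
lemma KD_indep (A B M : V) (α : ℝ) (hA : A ≠ M)
    (hcol : ¬ Collinear ℝ ({A, B, α • (A - M) + M} : Set V)) :
    ∀ x y : ℝ, x • (A - M) + y • (B - M) = 0 → x = 0 ∧ y = 0 := by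
  intro x y h
  by_cases hy : y = 0
  · subst hy
    refine ⟨?_, rfl⟩
    rw [zero_smul, add_zero] at h
    rcases smul_eq_zero.mp h with h | h
    · exact h
    · exact absurd (sub_eq_zero.mp h) hA
  · exfalso
    apply hcol
    rw [collinear_iff_exists_forall_eq_smul_vadd]
    refine ⟨M, A - M, ?_⟩
    intro q hq
    simp only [Set.mem_insert_iff, Set.mem_singleton_iff] at hq
    have h3 : B - M = (-x / y) • (A - M) := by
      have h2 : y • (B - M) = (-x) • (A - M) := by
        linear_combination (norm := module) h
      have h4 : y • (B - M) = y • ((-x / y) • (A - M)) := by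
        rw [h2, smul_smul]
        congr 1
        field_simp
      exact smul_right_injective V hy h4
    rcases hq with h' | h' | h'
    · refine ⟨1, ?_⟩
      rw [h', vadd_eq_add]
      module
    · refine ⟨-x / y, ?_⟩
      rw [h', vadd_eq_add]
      linear_combination (norm := module) h3
    · refine ⟨α, ?_⟩
      rw [h', vadd_eq_add]

/-- Forward direction, one quadrilateral: any dual has its factor on side AB
equal to σ times its factor on side DA. -/
lemma KD_ratio (A B C D M A' B' C' D' : V) (σ : ℝ)
    (hnd : NondegQuad A B C D) (hM : DiagIntersection A B C D M)
    (hσ : D - M = σ • (B - M)) (hd : IsDualQuad A B C D A' B' C' D') :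
    ∃ c d : ℝ, c ≠ 0 ∧ d ≠ 0 ∧ B' - A' = c • (B - A) ∧ A' - D' = d • (A - D) ∧
      c = σ * d := by
  obtain ⟨hAB, hAC, hAD, hBC, hBD, hCD, hABC, -, -, -, -⟩ := hnd
  obtain ⟨hMAC, hMBD, hMA, hMB, hMC, hMD⟩ := hM
  obtain ⟨α, hα0, hα1, hα⟩ := KD_alpha A C M hMAC hMA hMC
  have hCval : C = α • (A - M) + M := by
    rw [← hα]; abel
  have hind : ∀ x y : ℝ, x • (A - M) + y • (B - M) = 0 → x = 0 ∧ y = 0 := by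
    apply KD_indep A B M α hMA.symm
    rw [← hCval]
    exact hABC
  obtain ⟨⟨c₁, hc₁0, h1⟩, ⟨c₂, hc₂0, h2⟩, ⟨c₃, hc₃0, h3⟩, ⟨c₄, hc₄0, h4⟩,
    ⟨c₅, hc₅0, h5⟩, ⟨c₆, hc₆0, h6⟩⟩ := hd
  have e2 : (-c₆ - (c₂ - c₃ - c₆) * α) • (A - M) + (c₂ - σ * c₃) • (B - M) = 0 := by
    linear_combination (norm := module) h2 + h3 - h6 + (c₂ - c₃ - c₆) • hα + c₃ • hσ
  have e3 : (c₁ - c₄ - α * (c₂ - c₃)) • (A - M) +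
      (c₂ - c₁ - σ * (c₃ - c₄)) • (B - M) = 0 := by
    linear_combination (norm := module) h1 + h2 + h3 + h4 + (c₂ - c₃) • hα + (c₃ - c₄) • hσ
  obtain ⟨-, k2⟩ := hind _ _ e2
  obtain ⟨-, k3⟩ := hind _ _ e3
  exact ⟨c₁, c₄, hc₁0, hc₄0, h1, h4, by linarith⟩

/-- Backward direction, one quadrilateral: construct a dual with prescribed
base point `g` and prescribed factor `a` on side AB; the factor on the side
DA is then `a / σ`. -/
lemma KD_construct (A B C D M : V) (σ : ℝ)
    (hnd : NondegQuad A B C D) (hM : DiagIntersection A B C D M)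
    (hσ : D - M = σ • (B - M)) (a : ℝ) (ha : a ≠ 0) (g : V) :
    ∃ gC : V, IsDualQuad A B C D g (g + a • (B - A)) gC (g + (a / σ) • (D - A)) := by
  obtain ⟨hAB, hAC, hAD, hBC, hBD, hCD, hABC, -, -, -, -⟩ := hnd
  obtain ⟨hMAC, hMBD, hMA, hMB, hMC, hMD⟩ := hM
  obtain ⟨α, hα0, hα1, hα⟩ := KD_alpha A C M hMAC hMA hMC
  obtain ⟨hσ0, hσ1⟩ := KD_sigma B D M σ hσ hMD hBD
  have hα1' : α - 1 ≠ 0 := sub_ne_zero.mpr hα1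
  have hσ1' : σ - 1 ≠ 0 := sub_ne_zero.mpr hσ1
  have hCval : C = α • (A - M) + M := by rw [← hα]; abel
  have hDval : D = σ • (B - M) + M := by rw [← hσ]; abel
  subst hCval hDval
  refine ⟨g + (a * (α - 1) / (α * (σ - 1))) • ((σ • (B - M) + M) - B), ?_, ?_, ?_, ?_, ?_, ?_⟩
  · exact ⟨a, ha, by module⟩
  · refine ⟨a / α, div_ne_zero ha hα0, ?_⟩
    match_scalars <;> (field_simp; try ring)
  · refine ⟨a / (α * σ), div_ne_zero ha (mul_ne_zero hα0 hσ0), ?_⟩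
    match_scalars <;> (field_simp; try ring)
  · refine ⟨a / σ, div_ne_zero ha hσ0, ?_⟩
    match_scalars <;> (field_simp; try ring)
  · refine ⟨a * (α - 1) / (α * (σ - 1)), div_ne_zero (mul_ne_zero ha hα1')
      (mul_ne_zero hα0 hσ1'), ?_⟩
    match_scalars <;> (field_simp; try ring)
  · refine ⟨a * (σ - 1) / (σ * (α - 1)), div_ne_zero (mul_ne_zero ha hσ1')
      (mul_ne_zero hσ0 hα1'), ?_⟩
    match_scalars <;> (field_simp; try ring)

end Helpers

/-- Algebraic characterization of simultaneous dualizability of the four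
quadrilaterals around a vertex `f` of a two-dimensional Q-net: the duals
exist if and only if the product of the ratios in which the intersection
points of the diagonals divide the diagonals not passing through `f`
equals `1`. -/
theorem koenigs_vertex_star_dualizable {V : Type*} [AddCommGroup V] [Module ℝ V]
    (f f₁ f₂ fm1 fm2 f₁₂ fm1_2 fm1m2 f1m2 : V)
    (M₁ M₂ M₃ M₄ : V) (σ₁ σ₂ σ₃ σ₄ : ℝ)
    (hQ1 : NondegQuad f f₁ f₁₂ f₂) (hQ2 : NondegQuad f f₂ fm1_2 fm1)
    (hQ3 : NondegQuad f fm1 fm1m2 fm2) (hQ4 : NondegQuad f fm2 f1m2 f₁)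
    (hM1 : DiagIntersection f f₁ f₁₂ f₂ M₁)
    (hM2 : DiagIntersection f f₂ fm1_2 fm1 M₂)
    (hM3 : DiagIntersection f fm1 fm1m2 fm2 M₃)
    (hM4 : DiagIntersection f fm2 f1m2 f₁ M₄)
    (hσ₁ : f₂ - M₁ = σ₁ • (f₁ - M₁))
    (hσ₂ : fm1 - M₂ = σ₂ • (f₂ - M₂))
    (hσ₃ : fm2 - M₃ = σ₃ • (fm1 - M₃))
    (hσ₄ : f₁ - M₄ = σ₄ • (fm2 - M₄)) :
    (∃ g g₁ g₂ gm1 gm2 g₁₂ gm1_2 gm1m2 g1m2 : V,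
        IsDualQuad f f₁ f₁₂ f₂ g g₁ g₁₂ g₂ ∧
        IsDualQuad f f₂ fm1_2 fm1 g g₂ gm1_2 gm1 ∧
        IsDualQuad f fm1 fm1m2 fm2 g gm1 gm1m2 gm2 ∧
        IsDualQuad f fm2 f1m2 f₁ g gm2 g1m2 g₁) ↔
      σ₁ * σ₂ * σ₃ * σ₄ = 1 := by
  have hσ₁0 := (KD_sigma f₁ f₂ M₁ σ₁ hσ₁ hM1.2.2.2.2.2 hQ1.2.2.2.2.1).1
  have hσ₂0 := (KD_sigma f₂ fm1 M₂ σ₂ hσ₂ hM2.2.2.2.2.2 hQ2.2.2.2.2.1).1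
  have hσ₃0 := (KD_sigma fm1 fm2 M₃ σ₃ hσ₃ hM3.2.2.2.2.2 hQ3.2.2.2.2.1).1
  have hσ₄0 := (KD_sigma fm2 f₁ M₄ σ₄ hσ₄ hM4.2.2.2.2.2 hQ4.2.2.2.2.1).1
  constructor
  · rintro ⟨g, g₁, g₂, gm1, gm2, g₁₂, gm1_2, gm1m2, g1m2, hd1, hd2, hd3, hd4⟩
    obtain ⟨c₁, d₁, hc₁, -, hB1, hD1, hr1⟩ :=
      KD_ratio f f₁ f₁₂ f₂ M₁ g g₁ g₁₂ g₂ σ₁ hQ1 hM1 hσ₁ hd1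
    obtain ⟨c₂, d₂, -, -, hB2, hD2, hr2⟩ :=
      KD_ratio f f₂ fm1_2 fm1 M₂ g g₂ gm1_2 gm1 σ₂ hQ2 hM2 hσ₂ hd2
    obtain ⟨c₃, d₃, -, -, hB3, hD3, hr3⟩ :=
      KD_ratio f fm1 fm1m2 fm2 M₃ g gm1 gm1m2 gm2 σ₃ hQ3 hM3 hσ₃ hd3
    obtain ⟨c₄, d₄, -, -, hB4, hD4, hr4⟩ :=
      KD_ratio f fm2 f1m2 f₁ M₄ g gm2 g1m2 g₁ σ₄ hQ4 hM4 hσ₄ hd4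
    have m1 : d₁ = c₂ := by
      have hv : f₂ - f ≠ 0 := sub_ne_zero.mpr (Ne.symm hQ1.2.2.1)
      have h0 : (d₁ - c₂) • (f₂ - f) = 0 := by
        linear_combination (norm := module) hB2 + hD1
      rcases smul_eq_zero.mp h0 with h | h
      · linarith [h]
      · exact absurd h hv
    have m2 : d₂ = c₃ := by
      have hv : fm1 - f ≠ 0 := sub_ne_zero.mpr (Ne.symm hQ2.2.2.1)
      have h0 : (d₂ - c₃) • (fm1 - f) = 0 := by
        linear_combination (norm := module) hB3 + hD2
      rcases smul_eq_zero.mp h0 with h | h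
      · linarith [h]
      · exact absurd h hv
    have m3 : d₃ = c₄ := by
      have hv : fm2 - f ≠ 0 := sub_ne_zero.mpr (Ne.symm hQ3.2.2.1)
      have h0 : (d₃ - c₄) • (fm2 - f) = 0 := by
        linear_combination (norm := module) hB4 + hD3
      rcases smul_eq_zero.mp h0 with h | h
      · linarith [h]
      · exact absurd h hv
    have m4 : d₄ = c₁ := by
      have hv : f₁ - f ≠ 0 := sub_ne_zero.mpr (Ne.symm hQ1.1)
      have h0 : (d₄ - c₁) • (f₁ - f) = 0 := by
        linear_combination (norm := module) hB1 + hD4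
      rcases smul_eq_zero.mp h0 with h | h
      · linarith [h]
      · exact absurd h hv
    have key : c₁ = σ₁ * (σ₂ * (σ₃ * (σ₄ * c₁))) := by
      calc c₁ = σ₁ * d₁ := hr1
        _ = σ₁ * c₂ := by rw [m1]
        _ = σ₁ * (σ₂ * d₂) := by rw [hr2]
        _ = σ₁ * (σ₂ * c₃) := by rw [m2]
        _ = σ₁ * (σ₂ * (σ₃ * d₃)) := by rw [hr3]
        _ = σ₁ * (σ₂ * (σ₃ * c₄)) := by rw [m3]
        _ = σ₁ * (σ₂ * (σ₃ * (σ₄ * d₄))) := by rw [hr4]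
        _ = σ₁ * (σ₂ * (σ₃ * (σ₄ * c₁))) := by rw [m4]
    have h0 : (σ₁ * σ₂ * σ₃ * σ₄ - 1) * c₁ = 0 := by linear_combination -key
    rcases mul_eq_zero.mp h0 with h | h
    · linarith [h]
    · exact absurd h hc₁
  · intro hprod
    obtain ⟨g₁₂', hd1⟩ := KD_construct f f₁ f₁₂ f₂ M₁ σ₁ hQ1 hM1 hσ₁ 1 one_ne_zero f
    obtain ⟨gm1_2', hd2⟩ := KD_construct f f₂ fm1_2 fm1 M₂ σ₂ hQ2 hM2 hσ₂ (1 / σ₁)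
      (one_div_ne_zero hσ₁0) f
    obtain ⟨gm1m2', hd3⟩ := KD_construct f fm1 fm1m2 fm2 M₃ σ₃ hQ3 hM3 hσ₃ (1 / σ₁ / σ₂)
      (div_ne_zero (one_div_ne_zero hσ₁0) hσ₂0) f
    obtain ⟨g1m2', hd4⟩ := KD_construct f fm2 f1m2 f₁ M₄ σ₄ hQ4 hM4 hσ₄ (1 / σ₁ / σ₂ / σ₃)
      (div_ne_zero (div_ne_zero (one_div_ne_zero hσ₁0) hσ₂0) hσ₃0) f
    have hclose : 1 / σ₁ / σ₂ / σ₃ / σ₄ = 1 := by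
      field_simp
      linarith [hprod]
    rw [hclose] at hd4
    exact ⟨f, f + 1 • (f₁ - f), f + (1 / σ₁) • (f₂ - f), f + (1 / σ₁ / σ₂) • (fm1 - f),
      f + (1 / σ₁ / σ₂ / σ₃) • (fm2 - f), g₁₂', gm1_2', gm1m2', g1m2',
      hd1, hd2, hd3, hd4⟩
end

section
/- Characterization of two-dimensional discrete Koenigs nets in terms of vertices, dimension N ≥ 4 (Theorem 'Discrete 2d Koenigs nets; characterization in terms of vertices', part 1, local form): Let N ≥ 4 and let f, f₁, f₂, f₋₁, f₋₂, f₁₂, f₋₁,₂, f₋₁,₋₂, f₁,₋₂ ∈ ℝᴺ be nine points forming four planar quadrilaterals around f (the quadruples (f, f₁, f₁₂, f₂), (f, f₂, f₋₁,₂, f₋₁), (f, f₋₁, f₋₁,₋₂, f₋₂), (f, f₋₂, f₁,₋₂, f₁) are each coplanar), where f₁, f₂, f₋₁, f₋₂ are affinely independent, the affine span of all nine points has dimension at least 4, and the two diagonals of each quadrilateral intersect in a point M_k distinct from the vertices (k = 1,2,3,4). Then the four points M₁, M₂, M₃, M₄ lie in an affine subspace of dimension at most 2 if and only if the five points f, f₁₂,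 f₋₁,₂, f₋₁,₋₂, f₁,₋₂ lie in an affine subspace of dimension at most 3. -/
open Module Submodule
set_option maxHeartbeats 1000000

section KoenigsAux

variable {V : Type*} [AddCommGroup V] [Module ℝ V]

/-- Core algebraic fact: a nontrivial linear relation among the four "cyclic" vectors
forces equality of the two coefficient products. -/
lemma koenigs_forward (e0 e1 e2 e3 : V)
    (hE : LinearIndependent ℝ ![e0, e1, e2, e3])
    (a a' b b' c c' d d' : ℝ)
    (ha : a ≠ 0) (ha' : a' ≠ 0) (hb : b ≠ 0) (hb' : b' ≠ 0)
    (hc : c ≠ 0) (hc' : c' ≠ 0) (hd : d ≠ 0) (hd' : d' ≠ 0)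
    (g : Fin 4 → ℝ)
    (hg : g 0 • (a • e0 + a' • e1) + g 1 • (b • e1 + b' • e2)
        + g 2 • (c • e2 + c' • e3) + g 3 • (d • e3 + d' • e0) = 0)
    (hi : ∃ i, g i ≠ 0) :
    a * b * c * d = a' * b' * c' * d' := by
  have hsum : (g 0 * a + g 3 * d') • e0 + (g 0 * a' + g 1 * b) • e1
      + (g 1 * b' + g 2 * c) • e2 + (g 2 * c' + g 3 * d) • e3 = 0 := by
    rw [← hg]; module
  have hX := Fintype.linearIndependent_iff.mp hE
    ![g 0 * a + g 3 * d', g 0 * a' + g 1 * b, g 1 * b' + g 2 * c, g 2 * c' + g 3 * d]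
    (by rw [Fin.sum_univ_four]; simpa using hsum)
  have hA : g 0 * a + g 3 * d' = 0 := by simpa using hX 0
  have hB : g 0 * a' + g 1 * b = 0 := by simpa using hX 1
  have hC : g 1 * b' + g 2 * c = 0 := by simpa using hX 2
  have hD : g 2 * c' + g 3 * d = 0 := by simpa using hX 3
  have i01 : g 0 = 0 → g 1 = 0 := fun h => by
    rw [h] at hB; simpa [hb, mul_eq_zero] using hB
  have i12 : g 1 = 0 → g 2 = 0 := fun h => by
    rw [h] at hC; simpa [hc, mul_eq_zero] using hC
  have i23 : g 2 = 0 → g 3 = 0 := fun h => by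
    rw [h] at hD; simpa [hd, mul_eq_zero] using hD
  have i30 : g 3 = 0 → g 0 = 0 := fun h => by
    rw [h] at hA; simpa [ha, mul_eq_zero] using hA
  have h0 : g 0 ≠ 0 := by
    obtain ⟨i, hi⟩ := hi
    fin_cases i
    · exact hi
    · exact fun h => hi (i01 h)
    · exact fun h => hi (i12 (i01 h))
    · exact fun h => hi (i23 (i12 (i01 h)))
  have h1 : g 1 ≠ 0 := fun h => h0 (i30 (i23 (i12 h)))
  have h2 : g 2 ≠ 0 := fun h => h1 (i01 (i30 (i23 h)))
  have h3 : g 3 ≠ 0 := fun h => h2 (i12 (i01 (i30 h)))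
  have key : g 0 * g 1 * g 2 * g 3 * (a * b * c * d - a' * b' * c' * d') = 0 := by
    linear_combination (g 1 * b * (g 2 * c) * (g 3 * d)) * hA
      - (g 3 * d' * (g 2 * c) * (g 3 * d)) * hB
      + (g 3 * d' * (g 0 * a') * (g 3 * d)) * hC
      - (g 3 * d' * (g 0 * a') * (g 1 * b')) * hD
  have hG : g 0 * g 1 * g 2 * g 3 ≠ 0 :=
    mul_ne_zero (mul_ne_zero (mul_ne_zero h0 h1) h2) h3
  have := (mul_eq_zero.mp key).resolve_left hG
  linarith [sub_eq_zero.mp this]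

lemma koenigs_lin (e0 e1 e2 e3 : V)
    (hE : LinearIndependent ℝ ![e0, e1, e2, e3])
    (a a' b b' c c' d d' : ℝ)
    (ha : a ≠ 0) (ha' : a' ≠ 0) (hb : b ≠ 0) (hb' : b' ≠ 0)
    (hc : c ≠ 0) (hc' : c' ≠ 0) (hd : d ≠ 0) (hd' : d' ≠ 0) :
    ¬ LinearIndependent ℝ
        ![a • e0 + a' • e1, b • e1 + b' • e2, c • e2 + c' • e3, d • e3 + d' • e0]
      ↔ a * b * c * d = a' * b' * c' * d' := by
  rw [Fintype.not_linearIndependent_iff]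
  constructor
  · rintro ⟨g, hg, hi⟩
    refine koenigs_forward e0 e1 e2 e3 hE a a' b b' c c' d d' ha ha' hb hb' hc hc' hd hd' g ?_ hi
    rw [Fin.sum_univ_four] at hg
    simpa [add_assoc] using hg
  · intro hprod
    refine ⟨![b * c * d, -(a' * c * d), a' * b' * d, -(a' * b' * c')], ?_, 0, ?_⟩
    · rw [Fin.sum_univ_four]
      have hid : (b * c * d) • (a • e0 + a' • e1) + (-(a' * c * d)) • (b • e1 + b' • e2)
          + (a' * b' * d) • (c • e2 + c' • e3) + (-(a' * b' * c')) • (d • e3 + d' • e0)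
          = (a * b * c * d - a' * b' * c' * d') • e0 := by module
      simpa [add_assoc, hprod] using hid
    · simp [mul_ne_zero, hb, hc, hd]

lemma koenigs_aff (e0 e1 e2 e3 : V)
    (hE : LinearIndependent ℝ ![e0, e1, e2, e3])
    (a a' b b' c c' d d' : ℝ)
    (ha : a ≠ 0) (ha' : a' ≠ 0) (hb : b ≠ 0) (hb' : b' ≠ 0)
    (hc : c ≠ 0) (hc' : c' ≠ 0) (hd : d ≠ 0) (hd' : d' ≠ 0)
    (hsa : a + a' = 1) (hsb : b + b' = 1) (hsc : c + c' = 1) (hsd : d + d' = 1)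
    (f : V) :
    ¬ AffineIndependent ℝ
        ![f + (a • e0 + a' • e1), f + (b • e1 + b' • e2),
          f + (c • e2 + c' • e3), f + (d • e3 + d' • e0)]
      ↔ a * b * c * d = a' * b' * c' * d' := by
  classical
  constructor
  · intro hna
    rw [affineIndependent_iff] at hna
    push_neg at hna
    obtain ⟨s, w, hw0, hwp, i, his, hwi⟩ := hna
    set g : Fin 4 → ℝ := fun j => if j ∈ s then w j else 0 with hgdef
    have hgs : ∀ (p : Fin 4 → V), ∑ j ∈ s, w j • p j = ∑ j, g j • p j := by
      intro p
      simp only [hgdef, ite_smul, zero_smul]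
      rw [Finset.sum_ite_mem, Finset.univ_inter]
    have hgsum : ∑ j, g j = 0 := by
      simp only [hgdef]
      rw [Finset.sum_ite_mem, Finset.univ_inter]
      exact hw0
    have hgp : ∑ j, g j • (![f + (a • e0 + a' • e1), f + (b • e1 + b' • e2),
        f + (c • e2 + c' • e3), f + (d • e3 + d' • e0)]) j = 0 := by
      rw [← hgs]; exact hwp
    rw [Fin.sum_univ_four] at hgp hgsum
    simp only [Matrix.cons_val_zero, Matrix.cons_val_one, Matrix.head_cons,
      Matrix.cons_val_two, Matrix.tail_cons, Matrix.cons_val_three] at hgp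
    refine koenigs_forward e0 e1 e2 e3 hE a a' b b' c c' d d' ha ha' hb hb' hc hc' hd hd' g ?_
      ⟨i, by simpa [hgdef, his] using hwi⟩
    have : g 0 • (a • e0 + a' • e1) + g 1 • (b • e1 + b' • e2)
        + g 2 • (c • e2 + c' • e3) + g 3 • (d • e3 + d' • e0)
        = (g 0 • (f + (a • e0 + a' • e1)) + g 1 • (f + (b • e1 + b' • e2))
          + g 2 • (f + (c • e2 + c' • e3)) + g 3 • (f + (d • e3 + d' • e0)))
          - (g 0 + g 1 + g 2 + g 3) • f := by module
    rw [this, hgp, hgsum]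
    simp
  · intro hprod hai
    set g : Fin 4 → ℝ := ![b * c * d, -(a' * c * d), a' * b' * d, -(a' * b' * c')] with hgdef
    have hgsum : ∑ j, g j = 0 := by
      rw [Fin.sum_univ_four]
      simp only [hgdef, Matrix.cons_val_zero, Matrix.cons_val_one, Matrix.head_cons,
        Matrix.cons_val_two, Matrix.tail_cons, Matrix.cons_val_three]
      linear_combination hprod - b * c * d * hsa + a' * c * d * hsb
        - a' * b' * d * hsc + a' * b' * c' * hsd
    have hzero := affineIndependent_iff.mp hai Finset.univ g hgsum ?_ 0 (Finset.mem_univ 0)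
    · simp only [hgdef, Matrix.cons_val_zero] at hzero
      exact mul_ne_zero (mul_ne_zero hb hc) hd hzero
    · rw [Fin.sum_univ_four]
      have hid : (b * c * d) • (f + (a • e0 + a' • e1))
          + (-(a' * c * d)) • (f + (b • e1 + b' • e2))
          + (a' * b' * d) • (f + (c • e2 + c' • e3))
          + (-(a' * b' * c')) • (f + (d • e3 + d' • e0))
          = (b * c * d - a' * c * d + a' * b' * d - a' * b' * c') • f
            + (a * b * c * d - a' * b' * c' * d') • e0 := by module
      have hf0 : b * c * d - a' * c * d + a' * b' * d - a' * b' * c' = 0 := by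
        linear_combination hprod - b * c * d * hsa + a' * c * d * hsb
          - a' * b' * d * hsc + a' * b' * c' * hsd
      simp only [hgdef, Matrix.cons_val_zero, Matrix.cons_val_one, Matrix.head_cons,
        Matrix.cons_val_two, Matrix.tail_cons, Matrix.cons_val_three]
      rw [hid, hf0, sub_eq_zero.mpr hprod]
      simp

/-- Extracting the affine data of one quadrilateral: the intersection point of the
diagonals gives a normalized representation of the point and of the opposite vertex. -/
lemma koenigs_quad_extract (f p q D M : V)
    (hMd : M ∈ affineSpan ℝ ({f, D} : Set V))
    (hMl : M ∈ affineSpan ℝ ({p, q} : Set V))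
    (hMf : M ≠ f) (hMp : M ≠ p) (hMq : M ≠ q) :
    ∃ u t : ℝ, u ≠ 0 ∧ 1 - u ≠ 0 ∧ t ≠ 0 ∧
      M - f = (1 - u) • (p - f) + u • (q - f) ∧
      D - f = (t * (1 - u)) • (p - f) + (t * u) • (q - f) := by
  obtain ⟨r, hr⟩ := vadd_left_mem_affineSpan_pair.mp
    (show (M -ᵥ f) +ᵥ f ∈ line[ℝ, f, D] by rwa [vsub_vadd])
  obtain ⟨u, hu⟩ := vadd_left_mem_affineSpan_pair.mp
    (show (M -ᵥ p) +ᵥ p ∈ line[ℝ, p, q] by rwa [vsub_vadd])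
  simp only [vsub_eq_sub] at hr hu
  have hrne : r ≠ 0 := by
    rintro rfl
    rw [zero_smul] at hr
    exact hMf (sub_eq_zero.mp hr.symm)
  have hu0 : u ≠ 0 := by
    rintro rfl
    rw [zero_smul] at hu
    exact hMp (sub_eq_zero.mp hu.symm)
  have hu1 : 1 - u ≠ 0 := by
    intro h
    have : u = 1 := by linarith
    subst this
    rw [one_smul] at hu
    exact hMq (sub_left_inj.mp hu).symm
  have hw : M - f = (1 - u) • (p - f) + u • (q - f) := by
    linear_combination (norm := module) -hu
  have h1 : D - f = r⁻¹ • (M - f) := by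
    rw [← hr, smul_smul, inv_mul_cancel₀ hrne, one_smul]
  exact ⟨u, r⁻¹, hu0, hu1, inv_ne_zero hrne, hw, by rw [h1, hw]; module⟩

/-- For a family of four vectors, the span has dimension at most `3` iff the family
is linearly dependent. -/
lemma koenigs_finrank_le_three_iff (v : Fin 4 → V) :
    finrank ℝ (span ℝ (Set.range v)) ≤ 3 ↔ ¬ LinearIndependent ℝ v := by
  constructor
  · intro h hli
    have := finrank_span_eq_card hli
    rw [Fintype.card_fin] at this
    omega
  · intro h
    have hle : finrank ℝ (span ℝ (Set.range v)) ≤ 4 := by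
      simpa [Set.finrank] using finrank_range_le_card (R := ℝ) v
    have hne : finrank ℝ (span ℝ (Set.range v)) ≠ 4 := fun he =>
      h (linearIndependent_iff_card_eq_finrank_span.mpr (by
        rw [Fintype.card_fin]; exact he.symm))
    omega

lemma koenigs_set_eq_range (a b c d : V) :
    ({a, b, c, d} : Set V) = Set.range ![a, b, c, d] := by
  ext x
  simp only [Matrix.range_cons, Matrix.range_empty, Set.singleton_union, Set.union_empty,
    Set.mem_insert_iff, Set.mem_singleton_iff]

end KoenigsAux

/-- Characterization of two-dimensional discrete Koenigs nets in terms of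
vertices, for ambient dimension `N ≥ 4`: the four intersection points of
diagonals of the quadrilaterals around `f` are coplanar iff the five points
`f`, `f_{±1,±2}` lie in a three-dimensional affine subspace. -/
theorem koenigs_2d_vertices_dim_ge_four (N : ℕ) (hN : 4 ≤ N)
    (f f₁ f₂ fm1 fm2 f₁₂ fm1_2 fm1m2 f1m2 : EuclideanSpace ℝ (Fin N))
    (hc1 : Coplanar ℝ ({f, f₁, f₁₂, f₂} : Set (EuclideanSpace ℝ (Fin N))))
    (hc2 : Coplanar ℝ ({f, f₂, fm1_2, fm1} : Set (EuclideanSpace ℝ (Fin N))))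
    (hc3 : Coplanar ℝ ({f, fm1, fm1m2, fm2} : Set (EuclideanSpace ℝ (Fin N))))
    (hc4 : Coplanar ℝ ({f, fm2, f1m2, f₁} : Set (EuclideanSpace ℝ (Fin N))))
    (hind : AffineIndependent ℝ ![f₁, f₂, fm1, fm2])
    (hspan : 4 ≤ Module.finrank ℝ (vectorSpan ℝ
      ({f, f₁, f₂, fm1, fm2, f₁₂, fm1_2, fm1m2, f1m2} : Set (EuclideanSpace ℝ (Fin N)))))
    (M₁ M₂ M₃ M₄ : EuclideanSpace ℝ (Fin N))
    (hM₁ : M₁ ∈ affineSpan ℝ ({f, f₁₂} : Set (EuclideanSpace ℝ (Fin N))))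
    (hM₁' : M₁ ∈ affineSpan ℝ ({f₁, f₂} : Set (EuclideanSpace ℝ (Fin N))))
    (hM₁'' : M₁ ≠ f ∧ M₁ ≠ f₁ ∧ M₁ ≠ f₁₂ ∧ M₁ ≠ f₂)
    (hM₂ : M₂ ∈ affineSpan ℝ ({f, fm1_2} : Set (EuclideanSpace ℝ (Fin N))))
    (hM₂' : M₂ ∈ affineSpan ℝ ({f₂, fm1} : Set (EuclideanSpace ℝ (Fin N))))
    (hM₂'' : M₂ ≠ f ∧ M₂ ≠ f₂ ∧ M₂ ≠ fm1_2 ∧ M₂ ≠ fm1)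
    (hM₃ : M₃ ∈ affineSpan ℝ ({f, fm1m2} : Set (EuclideanSpace ℝ (Fin N))))
    (hM₃' : M₃ ∈ affineSpan ℝ ({fm1, fm2} : Set (EuclideanSpace ℝ (Fin N))))
    (hM₃'' : M₃ ≠ f ∧ M₃ ≠ fm1 ∧ M₃ ≠ fm1m2 ∧ M₃ ≠ fm2)
    (hM₄ : M₄ ∈ affineSpan ℝ ({f, f1m2} : Set (EuclideanSpace ℝ (Fin N))))
    (hM₄' : M₄ ∈ affineSpan ℝ ({fm2, f₁} : Set (EuclideanSpace ℝ (Fin N))))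
    (hM₄'' : M₄ ≠ f ∧ M₄ ≠ fm2 ∧ M₄ ≠ f1m2 ∧ M₄ ≠ f₁) :
    Coplanar ℝ ({M₁, M₂, M₃, M₄} : Set (EuclideanSpace ℝ (Fin N))) ↔
      Module.finrank ℝ (vectorSpan ℝ
        ({f, f₁₂, fm1_2, fm1m2, f1m2} : Set (EuclideanSpace ℝ (Fin N)))) ≤ 3 := by
  obtain ⟨hM₁f, hM₁p, hM₁D, hM₁q⟩ := hM₁''
  obtain ⟨hM₂f, hM₂p, hM₂D, hM₂q⟩ := hM₂''
  obtain ⟨hM₃f, hM₃p, hM₃D, hM₃q⟩ := hM₃''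
  obtain ⟨hM₄f, hM₄p, hM₄D, hM₄q⟩ := hM₄''
  obtain ⟨u₁, t₁, hu₁0, hu₁1, ht₁, hw1, hv1⟩ :=
    koenigs_quad_extract f f₁ f₂ f₁₂ M₁ hM₁ hM₁' hM₁f hM₁p hM₁q
  obtain ⟨u₂, t₂, hu₂0, hu₂1, ht₂, hw2, hv2⟩ :=
    koenigs_quad_extract f f₂ fm1 fm1_2 M₂ hM₂ hM₂' hM₂f hM₂p hM₂q
  obtain ⟨u₃, t₃, hu₃0, hu₃1, ht₃, hw3, hv3⟩ :=
    koenigs_quad_extract f fm1 fm2 fm1m2 M₃ hM₃ hM₃' hM₃f hM₃p hM₃q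
  obtain ⟨u₄, t₄, hu₄0, hu₄1, ht₄, hw4, hv4⟩ :=
    koenigs_quad_extract f fm2 f₁ f1m2 M₄ hM₄ hM₄' hM₄f hM₄p hM₄q
  -- the four edge vectors at `f`
  set e0 : EuclideanSpace ℝ (Fin N) := f₁ - f with he0
  set e1 : EuclideanSpace ℝ (Fin N) := f₂ - f with he1
  set e2 : EuclideanSpace ℝ (Fin N) := fm1 - f with he2
  set e3 : EuclideanSpace ℝ (Fin N) := fm2 - f with he3
  -- linear independence of the edge vectors
  have hE : LinearIndependent ℝ ![e0, e1, e2, e3] := by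
    have hle : vectorSpan ℝ
        ({f, f₁, f₂, fm1, fm2, f₁₂, fm1_2, fm1m2, f1m2} : Set (EuclideanSpace ℝ (Fin N)))
        ≤ span ℝ (Set.range ![e0, e1, e2, e3]) := by
      rw [vectorSpan_eq_span_vsub_set_right ℝ
        (show f ∈ ({f, f₁, f₂, fm1, fm2, f₁₂, fm1_2, fm1m2, f1m2} :
          Set (EuclideanSpace ℝ (Fin N))) by simp)]
      rw [Submodule.span_le]
      rintro x ⟨y, hy, rfl⟩
      have e0m : e0 ∈ span ℝ (Set.range ![e0, e1, e2, e3]) := subset_span ⟨0, rfl⟩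
      have e1m : e1 ∈ span ℝ (Set.range ![e0, e1, e2, e3]) := subset_span ⟨1, rfl⟩
      have e2m : e2 ∈ span ℝ (Set.range ![e0, e1, e2, e3]) := subset_span ⟨2, rfl⟩
      have e3m : e3 ∈ span ℝ (Set.range ![e0, e1, e2, e3]) := subset_span ⟨3, rfl⟩
      simp only [Set.mem_insert_iff, Set.mem_singleton_iff] at hy
      simp only [SetLike.mem_coe, vsub_eq_sub]
      rcases hy with rfl | rfl | rfl | rfl | rfl | rfl | rfl | rfl | rfl
      · simp
      · exact e0m
      · exact e1m
      · exact e2m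
      · exact e3m
      · rw [hv1]; exact add_mem (smul_mem _ _ e0m) (smul_mem _ _ e1m)
      · rw [hv2]; exact add_mem (smul_mem _ _ e1m) (smul_mem _ _ e2m)
      · rw [hv3]; exact add_mem (smul_mem _ _ e2m) (smul_mem _ _ e3m)
      · rw [hv4]; exact add_mem (smul_mem _ _ e3m) (smul_mem _ _ e0m)
    have h4 : 4 ≤ finrank ℝ (span ℝ (Set.range ![e0, e1, e2, e3])) :=
      le_trans hspan (Submodule.finrank_mono hle)
    have h4' : finrank ℝ (span ℝ (Set.range ![e0, e1, e2, e3])) ≤ 4 := by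
      simpa [Set.finrank] using finrank_range_le_card (R := ℝ) ![e0, e1, e2, e3]
    exact linearIndependent_iff_card_eq_finrank_span.mpr (by
      rw [Fintype.card_fin]
      exact le_antisymm h4 h4')
  -- nonzero coefficients
  have hT : t₁ * t₂ * t₃ * t₄ ≠ 0 :=
    mul_ne_zero (mul_ne_zero (mul_ne_zero ht₁ ht₂) ht₃) ht₄
  -- the right-hand side
  have hRHS : Module.finrank ℝ (vectorSpan ℝ
      ({f, f₁₂, fm1_2, fm1m2, f1m2} : Set (EuclideanSpace ℝ (Fin N)))) ≤ 3 ↔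
      (1 - u₁) * (1 - u₂) * (1 - u₃) * (1 - u₄) = u₁ * u₂ * u₃ * u₄ := by
    have himg : vectorSpan ℝ ({f, f₁₂, fm1_2, fm1m2, f1m2} : Set (EuclideanSpace ℝ (Fin N)))
        = span ℝ (Set.range ![f₁₂ - f, fm1_2 - f, fm1m2 - f, f1m2 - f]) := by
      rw [vectorSpan_eq_span_vsub_set_right ℝ
        (show f ∈ ({f, f₁₂, fm1_2, fm1m2, f1m2} : Set (EuclideanSpace ℝ (Fin N))) by simp)]
      have himage : ((· -ᵥ f) '' ({f, f₁₂, fm1_2, fm1m2, f1m2} :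
          Set (EuclideanSpace ℝ (Fin N))))
          = insert (0 : EuclideanSpace ℝ (Fin N))
              ({f₁₂ - f, fm1_2 - f, fm1m2 - f, f1m2 - f} :
                Set (EuclideanSpace ℝ (Fin N))) := by
        simp [Set.image_insert_eq, vsub_eq_sub, sub_self]
      rw [himage, Submodule.span_insert_zero, koenigs_set_eq_range]
    rw [himg, koenigs_finrank_le_three_iff, hv1, hv2, hv3, hv4,
      koenigs_lin e0 e1 e2 e3 hE _ _ _ _ _ _ _ _
        (mul_ne_zero ht₁ hu₁1) (mul_ne_zero ht₁ hu₁0)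
        (mul_ne_zero ht₂ hu₂1) (mul_ne_zero ht₂ hu₂0)
        (mul_ne_zero ht₃ hu₃1) (mul_ne_zero ht₃ hu₃0)
        (mul_ne_zero ht₄ hu₄1) (mul_ne_zero ht₄ hu₄0)]
    constructor
    · intro h
      apply mul_left_cancel₀ hT
      linear_combination h
    · intro h
      linear_combination (t₁ * t₂ * t₃ * t₄) * h
  -- the left-hand side
  have hLHS : Coplanar ℝ ({M₁, M₂, M₃, M₄} : Set (EuclideanSpace ℝ (Fin N))) ↔
      (1 - u₁) * (1 - u₂) * (1 - u₃) * (1 - u₄) = u₁ * u₂ * u₃ * u₄ := by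
    have hM1eq : M₁ = f + ((1 - u₁) • e0 + u₁ • e1) := sub_eq_iff_eq_add'.mp hw1
    have hM2eq : M₂ = f + ((1 - u₂) • e1 + u₂ • e2) := sub_eq_iff_eq_add'.mp hw2
    have hM3eq : M₃ = f + ((1 - u₃) • e2 + u₃ • e3) := sub_eq_iff_eq_add'.mp hw3
    have hM4eq : M₄ = f + ((1 - u₄) • e3 + u₄ • e0) := sub_eq_iff_eq_add'.mp hw4
    rw [coplanar_iff_finrank_le_two, koenigs_set_eq_range,
      finrank_vectorSpan_le_iff_not_affineIndependent ℝ ![M₁, M₂, M₃, M₄]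
        (by simp : Fintype.card (Fin 4) = 2 + 2),
      hM1eq, hM2eq, hM3eq, hM4eq,
      koenigs_aff e0 e1 e2 e3 hE _ _ _ _ _ _ _ _
        hu₁1 hu₁0 hu₂1 hu₂0 hu₃1 hu₃0 hu₄1 hu₄0
        (by ring) (by ring) (by ring) (by ring) f]
  rw [hLHS, hRHS]
end

section
/- Characterization of three-dimensional discrete Koenigs nets via intersection points of diagonals (Theorem 'Discrete 3d Koenigs nets; characterization in terms of intersection points of diagonals', local form): Let N ≥ 3 and let f, f₁, f₂, f₃, f₁₂, f₂₃, f₁₃ ∈ ℝᴺ with f₁, f₂, f₃ affinely independent. Suppose each of the quadruples (f, f₁, f₁₂, f₂), (f, f₂, f₂₃, f₃), (f, f₃, f₁₃, f₁) is coplanar and the two diagonals of each quadrilateral intersect: there exist scalars ξ₁, ξ₂, ξ₃ ∈ ℝ \ {0,1} such that M₁₂ = (1−ξ₁)f₁ + ξ₁f₂ lies on the line through f and f₁₂, M₂₃ = (1−ξ₂)f₂ + ξ₂f₃ lies on the line through f and f₂₃, and M₁₃ = (1−ξ₃)f₃ + ξ₃f₁ lies on the line through f and f₁₃. Then the three points M₁₂,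 M₂₃, M₁₃ are collinear if and only if (ξ₁ξ₂ξ₃)/((1−ξ₁)(1−ξ₂)(1−ξ₃)) = −1. -/
/-- Characterization of three-dimensional discrete Koenigs nets via the
intersection points of diagonals of the three faces of an elementary
hexahedron adjacent to a vertex `f`: the three intersection points are
collinear iff the product of the diagonal ratios equals `-1` (Menelaus). -/
theorem koenigs_3d_diagonal_points (N : ℕ) (hN : 3 ≤ N)
    (f f₁ f₂ f₃ f₁₂ f₂₃ f₁₃ : EuclideanSpace ℝ (Fin N))
    (hind : AffineIndependent ℝ ![f₁, f₂, f₃])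
    (hc1 : Coplanar ℝ ({f, f₁, f₁₂, f₂} : Set (EuclideanSpace ℝ (Fin N))))
    (hc2 : Coplanar ℝ ({f, f₂, f₂₃, f₃} : Set (EuclideanSpace ℝ (Fin N))))
    (hc3 : Coplanar ℝ ({f, f₃, f₁₃, f₁} : Set (EuclideanSpace ℝ (Fin N))))
    (ξ₁ ξ₂ ξ₃ : ℝ)
    (hξ₁0 : ξ₁ ≠ 0) (hξ₂0 : ξ₂ ≠ 0) (hξ₃0 : ξ₃ ≠ 0)
    (hξ₁1 : ξ₁ ≠ 1) (hξ₂1 : ξ₂ ≠ 1) (hξ₃1 : ξ₃ ≠ 1)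
    (M₁₂ M₂₃ M₁₃ : EuclideanSpace ℝ (Fin N))
    (hM₁₂ : M₁₂ = (1 - ξ₁) • f₁ + ξ₁ • f₂)
    (hM₁₂' : M₁₂ ∈ affineSpan ℝ ({f, f₁₂} : Set (EuclideanSpace ℝ (Fin N))))
    (hM₂₃ : M₂₃ = (1 - ξ₂) • f₂ + ξ₂ • f₃)
    (hM₂₃' : M₂₃ ∈ affineSpan ℝ ({f, f₂₃} : Set (EuclideanSpace ℝ (Fin N))))
    (hM₁₃ : M₁₃ = (1 - ξ₃) • f₃ + ξ₃ • f₁)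
    (hM₁₃' : M₁₃ ∈ affineSpan ℝ ({f, f₁₃} : Set (EuclideanSpace ℝ (Fin N)))) :
    Collinear ℝ ({M₁₂, M₂₃, M₁₃} : Set (EuclideanSpace ℝ (Fin N))) ↔
      (ξ₁ * ξ₂ * ξ₃) / ((1 - ξ₁) * (1 - ξ₂) * (1 - ξ₃)) = -1 := by
  have h1 : (1 : ℝ) - ξ₁ ≠ 0 := sub_ne_zero.mpr (Ne.symm hξ₁1)
  have h2 : (1 : ℝ) - ξ₂ ≠ 0 := sub_ne_zero.mpr (Ne.symm hξ₂1)
  have h3 : (1 : ℝ) - ξ₃ ≠ 0 := sub_ne_zero.mpr (Ne.symm hξ₃1)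
  -- linear independence of the two edge vectors
  have hli : ∀ a b : ℝ, a • (f₂ - f₁) + b • (f₃ - f₁) = 0 → a = 0 ∧ b = 0 := by
    intro a b hab
    have h := affineIndependent_iff.mp hind Finset.univ ![-a - b, a, b]
      (by simp [Fin.sum_univ_three]; ring)
      (by
        simp only [Fin.sum_univ_three, Matrix.cons_val_zero, Matrix.cons_val_one,
          Matrix.head_cons, Matrix.cons_val_two, Matrix.tail_cons]
        linear_combination (norm := module) hab)
    exact ⟨by simpa using h 1 (Finset.mem_univ _), by simpa using h 2 (Finset.mem_univ _)⟩
  have hu : M₂₃ - M₁₂ = (1 - ξ₁ - ξ₂) • (f₂ - f₁) + ξ₂ • (f₃ - f₁) := by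
    rw [hM₂₃, hM₁₂]; module
  have hw : M₁₃ - M₁₂ = (-ξ₁) • (f₂ - f₁) + (1 - ξ₃) • (f₃ - f₁) := by
    rw [hM₁₃, hM₁₂]; module
  have key : Collinear ℝ ({M₁₂, M₂₃, M₁₃} : Set (EuclideanSpace ℝ (Fin N))) ↔
      (1 - ξ₁ - ξ₂) * (1 - ξ₃) + ξ₁ * ξ₂ = 0 := by
    constructor
    · intro hcol
      rw [collinear_iff_exists_forall_eq_smul_vadd] at hcol
      obtain ⟨p₀, v, hv⟩ := hcol
      obtain ⟨r₁, hr₁⟩ := hv M₁₂ (by simp)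
      obtain ⟨r₂, hr₂⟩ := hv M₂₃ (by simp)
      obtain ⟨r₃, hr₃⟩ := hv M₁₃ (by simp)
      set a : ℝ := r₃ - r₁ with ha
      set b : ℝ := -(r₂ - r₁) with hb
      have hcomb : a • (M₂₃ - M₁₂) + b • (M₁₃ - M₁₂) = 0 := by
        rw [hr₁, hr₂, hr₃]
        simp only [vadd_eq_add, ha, hb]
        module
      rw [hu, hw] at hcomb
      have hcomb' : (a * (1 - ξ₁ - ξ₂) + b * (-ξ₁)) • (f₂ - f₁) +
          (a * ξ₂ + b * (1 - ξ₃)) • (f₃ - f₁) = 0 := by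
        rw [← hcomb]; module
      obtain ⟨e1, e2⟩ := hli _ _ hcomb'
      by_cases hab : a = 0 ∧ b = 0
      · -- then M₂₃ = M₁₂, so ξ₂ = 0, contradiction
        exfalso
        have hr : r₂ = r₁ := by have := hab.2; rw [hb] at this; linarith
        have hMeq : M₂₃ - M₁₂ = 0 := by rw [hr₁, hr₂, hr]; simp
        rw [hu] at hMeq
        exact hξ₂0 (hli _ _ hMeq).2
      · rcases not_and_or.mp hab with ha0 | hb0
        · have hD : a * ((1 - ξ₁ - ξ₂) * (1 - ξ₃) + ξ₁ * ξ₂) = 0 := by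
            linear_combination (1 - ξ₃) * e1 + ξ₁ * e2
          exact (mul_eq_zero.mp hD).resolve_left ha0
        · have hD : b * ((1 - ξ₁ - ξ₂) * (1 - ξ₃) + ξ₁ * ξ₂) = 0 := by
            linear_combination (-ξ₂) * e1 + (1 - ξ₁ - ξ₂) * e2
          exact (mul_eq_zero.mp hD).resolve_left hb0
    · intro hD
      rw [collinear_iff_exists_forall_eq_smul_vadd]
      refine ⟨M₁₂, M₂₃ - M₁₂, ?_⟩
      intro p hp
      have hkey : ξ₂ • (M₁₃ - M₁₂) = (1 - ξ₃) • (M₂₃ - M₁₂) := by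
        rw [hu, hw]
        match_scalars
        all_goals (first | ring1 | linear_combination hD | linear_combination -hD)
      have hlin : M₁₃ - M₁₂ = ((1 - ξ₃) / ξ₂) • (M₂₃ - M₁₂) := by
        rw [div_eq_inv_mul, mul_smul, ← hkey, inv_smul_smul₀ hξ₂0]
      rcases hp with hp | hp | hp
      · exact ⟨0, by simp [hp]⟩
      · exact ⟨1, by simp [hp]⟩
      · refine ⟨(1 - ξ₃) / ξ₂, ?_⟩
        rw [hp, vadd_eq_add]
        exact sub_eq_iff_eq_add.mp hlin
  rw [key, div_eq_iff (by exact mul_ne_zero (mul_ne_zero h1 h2) h3)]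
  constructor
  · intro h; linear_combination h
  · intro h; linear_combination h
end

section
/- Dual discrete Koenigs quadrilateral formulas (Theorem 'Dual Koenigs net', discrete local form): Let V be a real vector space, let f, f₁, f₂, f₁₂ ∈ V be the vertices of a planar quadrilateral, and let ν, ν₁, ν₂, ν₁₂ be nonzero real numbers with ν₁ ≠ ν₂ and ν ≠ ν₁₂. Suppose there exists a point M ∈ V with f₁₂ − M = (ν₁₂/ν)(f − M) and f₂ − M = (ν₂/ν₁)(f₁ − M) (M is the intersection point of the diagonals, dividing them in the ratios prescribed by ν). Then: (a) the closedness identity (f₁₂ − f₁)/(ν₁ν₁₂) + (f₁ − f)/(νν₁) = (f₁₂ − f₂)/(ν₂ν₁₂) + (f₂ − f)/(νν₂) holds; (b) setting a = (1/ν₁₂ − 1/ν)/(1/ν₂ − 1/ν₁) and defining the dual vertices f* = 0, f*₁ = (f₁ − f)/(νν₁), f*₂ = (f₂ − f)/(νν₂), f*₁₂ = f*₁ + (f₁₂ − f₁)/(ν₁ν₁₂), one has f*₁₂ − f* = a·(f₂ − f₁)/(ν₁ν₂) and f*₂ − f*₁ = a⁻¹·(f₁₂ − f)/(νν₁₂);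 in particular the quadrilateral (f*, f*₁, f*₁₂, f*₂) is dual to (f, f₁, f₁₂, f₂). -/
set_option maxHeartbeats 1000000


/-- Dual discrete Koenigs quadrilateral formulas: closedness of the dual
one-form and the diagonal formulas for the dual quadrilateral. -/
theorem dual_koenigs_quadrilateral {V : Type*} [AddCommGroup V] [Module ℝ V]
    (f f₁ f₂ f₁₂ : V)
    (hcop : Coplanar ℝ ({f, f₁, f₁₂, f₂} : Set V))
    (ν ν₁ ν₂ ν₁₂ : ℝ)
    (hν : ν ≠ 0) (hν₁ : ν₁ ≠ 0) (hν₂ : ν₂ ≠ 0) (hν₁₂ : ν₁₂ ≠ 0)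
    (h12 : ν₁ ≠ ν₂) (h012 : ν ≠ ν₁₂)
    (M : V)
    (hM1 : f₁₂ - M = (ν₁₂ / ν) • (f - M))
    (hM2 : f₂ - M = (ν₂ / ν₁) • (f₁ - M))
    (a : ℝ) (ha : a = (ν₁₂⁻¹ - ν⁻¹) / (ν₂⁻¹ - ν₁⁻¹))
    (fs fs₁ fs₂ fs₁₂ : V)
    (hfs : fs = 0)
    (hfs₁ : fs₁ = (ν * ν₁)⁻¹ • (f₁ - f))
    (hfs₂ : fs₂ = (ν * ν₂)⁻¹ • (f₂ - f))
    (hfs₁₂ : fs₁₂ = fs₁ + (ν₁ * ν₁₂)⁻¹ • (f₁₂ - f₁)) :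
    ((ν₁ * ν₁₂)⁻¹ • (f₁₂ - f₁) + (ν * ν₁)⁻¹ • (f₁ - f) =
        (ν₂ * ν₁₂)⁻¹ • (f₁₂ - f₂) + (ν * ν₂)⁻¹ • (f₂ - f)) ∧
      fs₁₂ - fs = a • ((ν₁ * ν₂)⁻¹ • (f₂ - f₁)) ∧
      fs₂ - fs₁ = a⁻¹ • ((ν * ν₁₂)⁻¹ • (f₁₂ - f)) ∧
      IsDualQuad f f₁ f₁₂ f₂ fs fs₁ fs₁₂ fs₂ := by

  have hd1 : ν₁₂⁻¹ - ν⁻¹ ≠ 0 := by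
    rw [sub_ne_zero]
    exact fun h => h012 (by field_simp at h; linarith)
  have hd2 : ν₂⁻¹ - ν₁⁻¹ ≠ 0 := by
    rw [sub_ne_zero]
    exact fun h => h12 (by field_simp at h; linarith)
  have hA : a ≠ 0 := by rw [ha]; exact div_ne_zero hd1 hd2
  have hf12 : f₁₂ = (ν₁₂ / ν) • (f - M) + M := by
    rw [← hM1]; abel
  have hf2 : f₂ = (ν₂ / ν₁) • (f₁ - M) + M := by
    rw [← hM2]; abel
  have key1 : (ν₁ * ν₁₂)⁻¹ • (f₁₂ - f₁) + (ν * ν₁)⁻¹ • (f₁ - f) =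
      (ν₂ * ν₁₂)⁻¹ • (f₁₂ - f₂) + (ν * ν₂)⁻¹ • (f₂ - f) := by
    subst hf12 hf2
    match_scalars <;> field_simp <;> ring
  have hn12 : ν₁ - ν₂ ≠ 0 := sub_ne_zero.mpr h12
  have hn012 : ν - ν₁₂ ≠ 0 := sub_ne_zero.mpr h012
  have haa : a = ((ν - ν₁₂) * ν₂ * ν₁) / ((ν₁ - ν₂) * ν₁₂ * ν) := by
    rw [ha]; field_simp
  have haa' : a⁻¹ = ((ν₁ - ν₂) * ν₁₂ * ν) / ((ν - ν₁₂) * ν₂ * ν₁) := by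
    rw [haa, inv_div]
  have key2 : fs₁₂ - fs = a • ((ν₁ * ν₂)⁻¹ • (f₂ - f₁)) := by
    subst hfs hfs₁₂ hfs₁ hf12 hf2
    rw [haa]
    match_scalars <;> field_simp <;> ring
  have key3 : fs₂ - fs₁ = a⁻¹ • ((ν * ν₁₂)⁻¹ • (f₁₂ - f)) := by
    subst hfs₂ hfs₁ hf12 hf2
    rw [haa']
    match_scalars <;> field_simp <;> ring
  refine ⟨key1, key2, key3, ?_, ?_, ?_, ?_, ?_, ?_⟩
  · exact ⟨(ν * ν₁)⁻¹, by positivity, by rw [hfs₁, hfs]; abel⟩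
  · exact ⟨(ν₁ * ν₁₂)⁻¹, by positivity, by rw [hfs₁₂]; abel⟩
  · refine ⟨(ν₂ * ν₁₂)⁻¹, by positivity, ?_⟩
    have h : fs₁₂ = fs₂ + (ν₂ * ν₁₂)⁻¹ • (f₁₂ - f₂) := by
      rw [hfs₁₂, hfs₁, hfs₂]
      linear_combination (norm := module) key1
    rw [h]; module
  · exact ⟨(ν * ν₂)⁻¹, by positivity, by rw [hfs₂, hfs]; module⟩
  · exact ⟨a * (ν₁ * ν₂)⁻¹, by positivity,
      by rw [key2, smul_smul]⟩
  · exact ⟨a⁻¹ * (ν * ν₁₂)⁻¹, by positivity,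
      by rw [key3, smul_smul]⟩
end

section
/- Moutard representative of a discrete Koenigs quadrilateral (Theorem 'Discrete Koenigs nets = discrete Moutard nets in homogeneous coordinates', local form): Let f, f₁, f₂, f₁₂ ∈ ℝᴺ and let ν, ν₁, ν₂, ν₁₂ be nonzero real numbers with ν₁ ≠ ν₂ and ν ≠ ν₁₂. Define y = (f/ν, 1/ν), y₁ = (f₁/ν₁, 1/ν₁), y₂ = (f₂/ν₂, 1/ν₂), y₁₂ = (f₁₂/ν₁₂, 1/ν₁₂) in ℝᴺ × ℝ, and a = (1/ν₁₂ − 1/ν)/(1/ν₂ − 1/ν₁). Then the following are equivalent: (i) there exists a point M ∈ ℝᴺ with f₁₂ − M = (ν₁₂/ν)(f − M) and f₂ − M = (ν₂/ν₁)(f₁ − M); (ii) the discrete Moutard equation with minus signs y₁₂ − y = a(y₂ − y₁) holds in ℝᴺ × ℝ. -/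
/-- Moutard representative of a discrete Koenigs quadrilateral: the diagonal
intersection condition on `(f, f₁, f₁₂, f₂)` encoded by `ν` is equivalent to
the discrete Moutard equation with minus signs for the lifts
`y = ν⁻¹ (f, 1)` to homogeneous coordinates. -/
theorem koenigs_moutard_representative {N : ℕ}
    (f f₁ f₂ f₁₂ : EuclideanSpace ℝ (Fin N))
    (ν ν₁ ν₂ ν₁₂ : ℝ)
    (hν : ν ≠ 0) (hν₁ : ν₁ ≠ 0) (hν₂ : ν₂ ≠ 0) (hν₁₂ : ν₁₂ ≠ 0)
    (h12 : ν₁ ≠ ν₂) (h012 : ν ≠ ν₁₂)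
    (y y₁ y₂ y₁₂ : EuclideanSpace ℝ (Fin N) × ℝ)
    (hy : y = (ν⁻¹ • f, ν⁻¹)) (hy₁ : y₁ = (ν₁⁻¹ • f₁, ν₁⁻¹))
    (hy₂ : y₂ = (ν₂⁻¹ • f₂, ν₂⁻¹)) (hy₁₂ : y₁₂ = (ν₁₂⁻¹ • f₁₂, ν₁₂⁻¹))
    (a : ℝ) (ha : a = (ν₁₂⁻¹ - ν⁻¹) / (ν₂⁻¹ - ν₁⁻¹)) :
    (∃ M : EuclideanSpace ℝ (Fin N),
        f₁₂ - M = (ν₁₂ / ν) • (f - M) ∧ f₂ - M = (ν₂ / ν₁) • (f₁ - M)) ↔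
      y₁₂ - y = a • (y₂ - y₁) := by
  subst hy hy₁ hy₂ hy₁₂ ha
  have hd : ν₁ - ν₂ ≠ 0 := sub_ne_zero.mpr h12
  have hd' : ν - ν₁₂ ≠ 0 := sub_ne_zero.mpr h012
  have hβ : ν₂⁻¹ - ν₁⁻¹ ≠ 0 := by
    intro h
    apply h12
    have := sub_eq_zero.mp h
    field_simp at this
    linarith
  have hα : ν₁₂⁻¹ - ν⁻¹ ≠ 0 := by
    intro h
    apply h012
    have := sub_eq_zero.mp h
    field_simp at this
    linarith
  have hsnd : ν₁₂⁻¹ - ν⁻¹ = (ν₁₂⁻¹ - ν⁻¹) / (ν₂⁻¹ - ν₁⁻¹) * (ν₂⁻¹ - ν₁⁻¹) :=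
    (div_mul_cancel₀ _ hβ).symm
  constructor
  · rintro ⟨M, h1, h2⟩
    have e1 : ν₁₂⁻¹ • f₁₂ - ν⁻¹ • f = (ν₁₂⁻¹ - ν⁻¹) • M := by
      have h1' := congrArg (fun v => ν₁₂⁻¹ • v) h1
      simp only [smul_sub, smul_smul] at h1'
      rw [show ν₁₂⁻¹ * (ν₁₂ / ν) = ν⁻¹ by field_simp] at h1'
      linear_combination (norm := module) h1'
    have e2 : ν₂⁻¹ • f₂ - ν₁⁻¹ • f₁ = (ν₂⁻¹ - ν₁⁻¹) • M := by
      have h2' := congrArg (fun v => ν₂⁻¹ • v) h2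
      simp only [smul_sub, smul_smul] at h2'
      rw [show ν₂⁻¹ * (ν₂ / ν₁) = ν₁⁻¹ by field_simp] at h2'
      linear_combination (norm := module) h2'
    refine Prod.ext ?_ ?_
    · show ν₁₂⁻¹ • f₁₂ - ν⁻¹ • f = _
      rw [e1]
      show _ = ((ν₁₂⁻¹ - ν⁻¹) / (ν₂⁻¹ - ν₁⁻¹)) • (ν₂⁻¹ • f₂ - ν₁⁻¹ • f₁)
      rw [e2, smul_smul, div_mul_cancel₀ _ hβ]
    · show ν₁₂⁻¹ - ν⁻¹ = _
      simpa using hsnd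
  · intro h
    have e : ν₁₂⁻¹ • f₁₂ - ν⁻¹ • f
        = ((ν₁₂⁻¹ - ν⁻¹) / (ν₂⁻¹ - ν₁⁻¹)) • (ν₂⁻¹ • f₂ - ν₁⁻¹ • f₁) := by
      have := congrArg Prod.fst h
      simpa [smul_sub, smul_smul] using this
    have E : (ν₁ - ν₂) • (ν • f₁₂ - ν₁₂ • f) = (ν - ν₁₂) • (ν₁ • f₂ - ν₂ • f₁) := by
      linear_combination (norm := skip) (ν * ν₁₂ * ν₁ * ν₂ * (ν₂⁻¹ - ν₁⁻¹)) • e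
      match_scalars <;> field_simp <;> ring
    refine ⟨(ν₁ - ν₂)⁻¹ • (ν₁ • f₂ - ν₂ • f₁), ?_, ?_⟩
    · linear_combination (norm := skip) (ν⁻¹ * (ν₁ - ν₂)⁻¹) • E
      match_scalars <;> field_simp <;> ring
    · match_scalars <;> field_simp <;> ring
end

section
/- Smooth Koenigs nets and duality (Theorem 'Dual Koenigs net', smooth case): Let N ≥ 1, let f: ℝ² → ℝᴺ and ν: ℝ² → ℝ be twice continuously differentiable with ν nowhere zero. Then for every u ∈ ℝ² the closedness identity ∂₂(∂₁f/ν²)(u) + ∂₁(∂₂f/ν²)(u) = 0 (i.e., the one-form df* with ∂₁f* = ∂₁f/ν² and ∂₂f* = −∂₂f/ν² is closed at u) holds if and only if f satisfies the Koenigs equation ∂₁∂₂f(u) = (∂₂ν(u)/ν(u))·∂₁f(u) + (∂₁ν(u)/ν(u))·∂₂f(u). -/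
/-- Partial derivative in the first coordinate direction of `ℝ²`. -/
noncomputable def pd1 {E : Type*} [NormedAddCommGroup E] [NormedSpace ℝ E]
    (g : ℝ × ℝ → E) (u : ℝ × ℝ) : E :=
  fderiv ℝ g u (1, 0)

/-- Partial derivative in the second coordinate direction of `ℝ²`. -/
noncomputable def pd2 {E : Type*} [NormedAddCommGroup E] [NormedSpace ℝ E]
    (g : ℝ × ℝ → E) (u : ℝ × ℝ) : E :=
  fderiv ℝ g u (0, 1)

/-! By the quotient rule, `∂ⱼ(∂ᵢf / ν²) = (∂ⱼ∂ᵢf - 2 (∂ⱼν / ν) ∂ᵢf) / ν²`. Adding the two mixed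
terms and using the symmetry of the second derivative of `f`, the closedness expression equals
`2 / ν²` times `∂₁∂₂f - (∂₂ν / ν) ∂₁f - (∂₁ν / ν) ∂₂f`, and `2 / ν² ≠ 0`. -/

section

variable {X F : Type*} [NormedAddCommGroup X] [NormedSpace ℝ X]
  [NormedAddCommGroup F] [NormedSpace ℝ F] {u : X}

theorem fderiv_inv_sq_apply {c : X → ℝ} (hc : DifferentiableAt ℝ c u) (hc0 : c u ≠ 0) (w : X) :
    fderiv ℝ (fun v => (c v ^ 2)⁻¹) u w = -(2 * fderiv ℝ c u w / c u ^ 3) := by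
  have h : HasFDerivAt (fun v => (c v ^ 2)⁻¹) _ u :=
    (hasDerivAt_inv (pow_ne_zero 2 hc0)).comp_hasFDerivAt u (hc.hasFDerivAt.pow 2)
  rw [h.fderiv]
  simp only [Nat.add_one_sub_one, pow_one, nsmul_eq_mul, Nat.cast_ofNat, neg_smul, neg_apply,
    smul_apply, smul_eq_mul, neg_inj]
  field_simp

theorem fderiv_inv_sq_smul_apply {c : X → ℝ} {g : X → F} (hc : DifferentiableAt ℝ c u)
    (hc0 : c u ≠ 0) (hg : DifferentiableAt ℝ g u) (w : X) :
    fderiv ℝ (fun v => (c v ^ 2)⁻¹ • g v) u w =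
      (c u ^ 2)⁻¹ • (fderiv ℝ g u w - (2 * fderiv ℝ c u w / c u) • g u) := by
  have hinv : DifferentiableAt ℝ (fun v => (c v ^ 2)⁻¹) u :=
    (hc.pow 2).inv (pow_ne_zero 2 hc0)
  rw [fderiv_fun_smul hinv hg]
  simp only [add_apply, smul_apply, ContinuousLinearMap.smulRight_apply,
    fderiv_inv_sq_apply hc hc0]
  match_scalars <;> field_simp

theorem ContDiffAt.differentiableAt_fderiv_apply {g : X → F} (hg : ContDiffAt ℝ 2 g u) (w : X) :
    DifferentiableAt ℝ (fun v => fderiv ℝ g v w) u :=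
  ((hg.fderiv_right (m := 1) le_rfl).differentiableAt one_ne_zero).clm_apply
    (differentiableAt_const w)

theorem ContDiffAt.fderiv_fderiv_apply_comm {g : X → F} (hg : ContDiffAt ℝ 2 g u) (v w : X) :
    fderiv ℝ (fun x => fderiv ℝ g x v) u w = fderiv ℝ (fun x => fderiv ℝ g x w) u v := by
  have hD := (hg.fderiv_right (m := 1) le_rfl).differentiableAt one_ne_zero
  simp only [fderiv_clm_apply hD (differentiableAt_const _), fderiv_const_apply]
  simpa using (hg.isSymmSndFDerivAt (by simp)).eq w v

end

theorem koenigs_dual_closedness_general {N : ℕ}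
    (f : ℝ × ℝ → EuclideanSpace ℝ (Fin N)) (ν : ℝ × ℝ → ℝ)
    (hf : ContDiff ℝ 2 f) (hν : ContDiff ℝ 2 ν) (hν0 : ∀ u, ν u ≠ 0)
    (u : ℝ × ℝ) :
    pd2 (fun v => ((ν v) ^ 2)⁻¹ • pd1 f v) u +
        pd1 (fun v => ((ν v) ^ 2)⁻¹ • pd2 f v) u = 0 ↔
      pd1 (fun v => pd2 f v) u =
        (pd2 ν u / ν u) • pd1 f u + (pd1 ν u / ν u) • pd2 f u := by
  have hν' := hν.differentiable two_ne_zero u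
  have hf' := hf.contDiffAt (x := u)
  have hexpand : pd2 (fun v => ((ν v) ^ 2)⁻¹ • pd1 f v) u +
        pd1 (fun v => ((ν v) ^ 2)⁻¹ • pd2 f v) u =
      (2 * (ν u ^ 2)⁻¹) • (pd1 (pd2 f) u -
        ((pd2 ν u / ν u) • pd1 f u + (pd1 ν u / ν u) • pd2 f u)) := by
    unfold pd1 pd2
    rw [fderiv_inv_sq_smul_apply hν' (hν0 u) (hf'.differentiableAt_fderiv_apply _),
      fderiv_inv_sq_smul_apply hν' (hν0 u) (hf'.differentiableAt_fderiv_apply _),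
      hf'.fderiv_fderiv_apply_comm (1, 0) (0, 1)]
    match_scalars <;> ring
  have hcoef : 2 * (ν u ^ 2)⁻¹ ≠ 0 := by have := hν0 u; positivity
  rw [hexpand, smul_eq_zero, or_iff_right hcoef, sub_eq_zero]

/-- Smooth Koenigs nets and duality: the one-form `df*` with
`∂₁f* = ∂₁f/ν²`, `∂₂f* = −∂₂f/ν²` is closed at `u` iff `f` satisfies the
Koenigs equation `∂₁∂₂f = (∂₂ν/ν)∂₁f + (∂₁ν/ν)∂₂f` at `u`. -/
theorem koenigs_dual_closedness {N : ℕ} (hN : 1 ≤ N)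
    (f : ℝ × ℝ → EuclideanSpace ℝ (Fin N)) (ν : ℝ × ℝ → ℝ)
    (hf : ContDiff ℝ 2 f) (hν : ContDiff ℝ 2 ν) (hν0 : ∀ u, ν u ≠ 0)
    (u : ℝ × ℝ) :
    pd2 (fun v => ((ν v) ^ 2)⁻¹ • pd1 f v) u +
        pd1 (fun v => ((ν v) ^ 2)⁻¹ • pd2 f v) u = 0 ↔
      pd1 (fun v => pd2 f v) u =
        (pd2 ν u / ν u) • pd1 f u + (pd1 ν u / ν u) • pd2 f u :=
  koenigs_dual_closedness_general f ν hf hν hν0 u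
end

section
/- Koenigs nets are Moutard nets in homogeneous coordinates (Theorem 'Koenigs nets = Moutard nets in homogeneous coordinates', smooth case): Let N ≥ 1, let f: ℝ² → ℝᴺ and ν: ℝ² → ℝ be twice continuously differentiable with ν nowhere zero, and define y: ℝ² → ℝᴺ × ℝ by y = ν⁻¹·(f, 1) and q: ℝ² → ℝ by q = ν·∂₁∂₂(ν⁻¹). Then f satisfies the Koenigs equation ∂₁∂₂f = (∂₂ν/ν)∂₁f + (∂₁ν/ν)∂₂f everywhere on ℝ² if and only if y satisfies the Moutard equation ∂₁∂₂y = q·y everywhere on ℝ². -/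
section Calculus

variable {𝕜 X E F : Type*} [NontriviallyNormedField 𝕜] [NormedAddCommGroup X] [NormedSpace 𝕜 X]
  [NormedAddCommGroup E] [NormedSpace 𝕜 E] [NormedAddCommGroup F] [NormedSpace 𝕜 F]

theorem fderiv_fun_smul_apply {c : X → 𝕜} {g : X → E} {u : X}
    (hc : DifferentiableAt 𝕜 c u) (hg : DifferentiableAt 𝕜 g u) (w : X) :
    fderiv 𝕜 (fun v => c v • g v) u w = fderiv 𝕜 c u w • g u + c u • fderiv 𝕜 g u w := by
  rw [fderiv_fun_smul hc hg, add_comm]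
  rfl

theorem fderiv_fun_prodMk_apply {g₁ : X → E} {g₂ : X → F} {u : X}
    (h₁ : DifferentiableAt 𝕜 g₁ u) (h₂ : DifferentiableAt 𝕜 g₂ u) (w : X) :
    fderiv 𝕜 (fun v => (g₁ v, g₂ v)) u w = (fderiv 𝕜 g₁ u w, fderiv 𝕜 g₂ u w) := by
  rw [h₁.fderiv_prodMk h₂]
  rfl

theorem fderiv_fun_inv_apply {c : X → 𝕜} {u : X} (hc : DifferentiableAt 𝕜 c u) (hu : c u ≠ 0)
    (w : X) : fderiv 𝕜 (fun v => (c v)⁻¹) u w = -fderiv 𝕜 c u w / c u ^ 2 := by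
  have h : HasFDerivAt (fun v => (c v)⁻¹) ((-(c u ^ 2)⁻¹) • fderiv 𝕜 c u) u :=
    (hasDerivAt_inv hu).comp_hasFDerivAt u hc.hasFDerivAt
  rw [h.fderiv, smul_apply, smul_eq_mul]
  ring

theorem ContDiff.differentiable_fderiv_apply {g : X → E} (hg : ContDiff 𝕜 2 g) (w : X) :
    Differentiable 𝕜 (fun v => fderiv 𝕜 g v w) :=
  ((hg.fderiv_right (m := 1) (by norm_num)).clm_apply contDiff_const).differentiable one_ne_zero

end Calculus

section Partials

variable {E F : Type*} [NormedAddCommGroup E] [NormedSpace ℝ E]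
  [NormedAddCommGroup F] [NormedSpace ℝ F]

theorem pd1_pd2_smul {c : ℝ × ℝ → ℝ} {g : ℝ × ℝ → E} (hc : ContDiff ℝ 2 c)
    (hg : ContDiff ℝ 2 g) (u : ℝ × ℝ) :
    pd1 (fun v => pd2 (fun w => c w • g w) v) u =
      pd1 (fun v => pd2 c v) u • g u + pd2 c u • pd1 g u +
        (pd1 c u • pd2 g u + c u • pd1 (fun v => pd2 g v) u) := by
  have hc₁ := hc.differentiable two_ne_zero
  have hg₁ := hg.differentiable two_ne_zero
  have hc₂ : Differentiable ℝ (pd2 c) := hc.differentiable_fderiv_apply (0, 1)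
  have hg₂ : Differentiable ℝ (pd2 g) := hg.differentiable_fderiv_apply (0, 1)
  have hpd2 : pd2 (fun w => c w • g w) = fun v => pd2 c v • g v + c v • pd2 g v :=
    funext fun v => fderiv_fun_smul_apply (hc₁ v) (hg₁ v) _
  rw [hpd2, pd1, fderiv_fun_add ((hc₂ u).fun_smul (hg₁ u)) ((hc₁ u).fun_smul (hg₂ u)),
    add_apply, fderiv_fun_smul_apply (hc₂ u) (hg₁ u),
    fderiv_fun_smul_apply (hc₁ u) (hg₂ u)]
  rfl

theorem pd1_pd2_prodMk {g₁ : ℝ × ℝ → E} {g₂ : ℝ × ℝ → F} (h₁ : ContDiff ℝ 2 g₁)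
    (h₂ : ContDiff ℝ 2 g₂) (u : ℝ × ℝ) :
    pd1 (fun v => pd2 (fun w => (g₁ w, g₂ w)) v) u =
      (pd1 (fun v => pd2 g₁ v) u, pd1 (fun v => pd2 g₂ v) u) := by
  have hpd2 : pd2 (fun w => (g₁ w, g₂ w)) = fun v => (pd2 g₁ v, pd2 g₂ v) :=
    funext fun v => fderiv_fun_prodMk_apply (h₁.differentiable two_ne_zero v)
      (h₂.differentiable two_ne_zero v) _
  have h₁₂ : Differentiable ℝ (pd2 g₁) := h₁.differentiable_fderiv_apply (0, 1)
  have h₂₂ : Differentiable ℝ (pd2 g₂) := h₂.differentiable_fderiv_apply (0, 1)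
  rw [hpd2, pd1, fderiv_fun_prodMk_apply (h₁₂ u) (h₂₂ u)]
  rfl

end Partials

theorem eq_div_smul_add_div_smul_iff {K E : Type*} [Field K] [AddCommGroup E] [Module K E]
    {ν : K} (hν : ν ≠ 0) (a b : K) (P Q R : E) :
    R = (a / ν) • P + (b / ν) • Q ↔ (-a / ν ^ 2) • P + ((-b / ν ^ 2) • Q + ν⁻¹ • R) = 0 := by
  have hsmul : (-a / ν ^ 2) • P + ((-b / ν ^ 2) • Q + ν⁻¹ • R) =
      ν⁻¹ • (R - ((a / ν) • P + (b / ν) • Q)) := by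
    match_scalars <;> field_simp
  rw [hsmul, smul_eq_zero, or_iff_right (inv_ne_zero hν), sub_eq_zero]

theorem koenigs_eq_moutard_smooth_general {N : ℕ}
    (f : ℝ × ℝ → EuclideanSpace ℝ (Fin N)) (ν : ℝ × ℝ → ℝ)
    (hf : ContDiff ℝ 2 f) (hν : ContDiff ℝ 2 ν) (hν0 : ∀ u, ν u ≠ 0)
    (y : ℝ × ℝ → EuclideanSpace ℝ (Fin N) × ℝ)
    (hy : ∀ u, y u = ((ν u)⁻¹ • f u, (ν u)⁻¹))
    (q : ℝ × ℝ → ℝ)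
    (hq : ∀ u, q u = ν u * pd1 (fun v => pd2 (fun w => (ν w)⁻¹) v) u) :
    (∀ u, pd1 (fun v => pd2 f v) u =
        (pd2 ν u / ν u) • pd1 f u + (pd1 ν u / ν u) • pd2 f u) ↔
      (∀ u, pd1 (fun v => pd2 y v) u = q u • y u) := by
  have hμ : ContDiff ℝ 2 fun w => (ν w)⁻¹ := hν.inv hν0
  have hμf : ContDiff ℝ 2 fun w => (ν w)⁻¹ • f w := hμ.smul hf
  obtain rfl : y = fun w => ((ν w)⁻¹ • f w, (ν w)⁻¹) := funext hy
  refine forall_congr' fun u => ?_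
  have hqμ : q u * (ν u)⁻¹ = pd1 (fun v => pd2 (fun w => (ν w)⁻¹) v) u := by
    rw [hq, mul_right_comm, mul_inv_cancel₀ (hν0 u), one_mul]
  have hν₁ := hν.differentiable two_ne_zero u
  have hμ₁ : pd1 (fun w => (ν w)⁻¹) u = -pd1 ν u / ν u ^ 2 := fderiv_fun_inv_apply hν₁ (hν0 u) _
  have hμ₂ : pd2 (fun w => (ν w)⁻¹) u = -pd2 ν u / ν u ^ 2 := fderiv_fun_inv_apply hν₁ (hν0 u) _
  rw [pd1_pd2_prodMk hμf hμ, pd1_pd2_smul hμ hf, Prod.smul_mk, smul_smul, smul_eq_mul,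
    hqμ, Prod.mk.injEq, and_iff_left rfl, add_assoc, add_eq_left, hμ₁, hμ₂]
  exact eq_div_smul_add_div_smul_iff (hν0 u) (pd2 ν u) (pd1 ν u) (pd1 f u) (pd2 f u) _

/-- Koenigs nets = Moutard nets in homogeneous coordinates (smooth case):
`f` satisfies the Koenigs equation everywhere iff the lift `y = ν⁻¹ (f, 1)`
satisfies the Moutard equation `∂₁∂₂y = q y` with `q = ν ∂₁∂₂(ν⁻¹)`. -/
theorem koenigs_eq_moutard_smooth {N : ℕ} (hN : 1 ≤ N)
    (f : ℝ × ℝ → EuclideanSpace ℝ (Fin N)) (ν : ℝ × ℝ → ℝ)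
    (hf : ContDiff ℝ 2 f) (hν : ContDiff ℝ 2 ν) (hν0 : ∀ u, ν u ≠ 0)
    (y : ℝ × ℝ → EuclideanSpace ℝ (Fin N) × ℝ)
    (hy : ∀ u, y u = ((ν u)⁻¹ • f u, (ν u)⁻¹))
    (q : ℝ × ℝ → ℝ)
    (hq : ∀ u, q u = ν u * pd1 (fun v => pd2 (fun w => (ν w)⁻¹) v) u) :
    (∀ u, pd1 (fun v => pd2 f v) u =
        (pd2 ν u / ν u) • pd1 f u + (pd1 ν u / ν u) • pd2 f u) ↔
      (∀ u, pd1 (fun v => pd2 y v) u = q u • y u) :=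
  koenigs_eq_moutard_smooth_general f ν hf hν hν0 y hy q hq
end

section
/- Multidimensional discrete isothermic nets: hexahedron characterization (Theorem 'Multidimensional discrete isothermic nets', local form): Let E be a Euclidean space of dimension N ≥ 3, and let f, f₁, f₂, f₃, f₁₂, f₁₃, f₂₃, f₁₂₃ ∈ E be eight pairwise distinct points forming a combinatorial cube such that each of the six face quadruples {f, f₁, f₁₂, f₂}, {f, f₂, f₂₃, f₃}, {f, f₁, f₁₃, f₃}, {f₁, f₁₂, f₁₂₃, f₁₃}, {f₂, f₁₂, f₁₂₃, f₂₃}, {f₃, f₁₃, f₁₂₃, f₂₃} is concyclic (its four points lie on a common circle). Assume moreover that no three of the eight points are collinear and that the eight points do not all lie on a single circle. Then the four 'black' vertices f, f₁₂, f₁₃, f₂₃ are concyclic if and only if the four 'white' vertices f₁, f₂, f₃, f₁₂₃ are concyclic. -/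
open EuclideanGeometry

/-!
Lifting `E` to the paraboloid `p ↦ (p, ‖p‖²)` in `E × ℝ` turns circles into plane sections, so a
quadruple with three non-collinear points is concyclic iff its lift is coplanar, and the theorem
becomes one of affine geometry about a hexahedron with planar faces. In the affine frame
`f, f₁, f₂, f₃` (a frame because not all eight points are coplanar), the faces through `f` give
`f₁₂ = (a₁, a₂, 0)`, `f₁₃ = (b₁, 0, b₃)`, `f₂₃ = (0, c₂, c₃)`, and the face through `f₁` gives
`f₁₂₃ = f₁ + α (f₁₂ - f₁) + β (f₁₃ - f₁)`. The two remaining faces and the white plane are three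
affine equations in `(α, β)`; their consistency determinant is
`(a₁ + a₂ - 1)(b₁ + b₃ - 1)(c₂ + c₃ - 1)(a₁b₃c₂ + a₂b₁c₃)`, whose last factor is the black
determinant and whose other factors vanish only on collinear triples. The converse is the same
statement for the cube relabelled by its central symmetry, which exchanges black and white.
-/

section AffineMap

variable {k V₁ P₁ V₂ P₂ : Type*} [DivisionRing k] [AddCommGroup V₁] [Module k V₁]
  [AddTorsor V₁ P₁] [AddCommGroup V₂] [Module k V₂] [AddTorsor V₂ P₂]

theorem Collinear.image {s : Set P₁} (h : Collinear k s) (f : P₁ →ᵃ[k] P₂) :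
    Collinear k (f '' s) := by
  have hle := lift_rank_map_le f.linear (vectorSpan k s)
  rw [AffineMap.map_vectorSpan] at hle
  exact Cardinal.lift_le_nat_iff.1 (hle.trans (Cardinal.lift_le_nat_iff.2 h))

theorem Coplanar.image {s : Set P₁} (h : Coplanar k s) (f : P₁ →ᵃ[k] P₂) :
    Coplanar k (f '' s) := by
  have hle := lift_rank_map_le f.linear (vectorSpan k s)
  rw [AffineMap.map_vectorSpan] at hle
  exact Cardinal.lift_le_nat_iff.1 (hle.trans (Cardinal.lift_le_nat_iff.2 h))

theorem coplanar_image_iff_of_injective {f : P₁ →ᵃ[k] P₂} (hf : Function.Injective f)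
    (s : Set P₁) : Coplanar k (f '' s) ↔ Coplanar k s := by
  have heq := lift_rank_range_of_injective (f.linear.comp (vectorSpan k s).subtype)
    (((AffineMap.linear_injective_iff f).2 hf).comp Subtype.val_injective)
  rw [LinearMap.range_comp, Submodule.range_subtype, AffineMap.map_vectorSpan] at heq
  rw [Coplanar, Coplanar, ← Cardinal.lift_le_ofNat_iff, heq, Cardinal.lift_le_ofNat_iff]

theorem AffineMap.coplanar_range_of_not_injective {f : (Fin 3 → k) →ᵃ[k] P₂}
    (hf : ¬ Function.Injective f) : Coplanar k (Set.range f) := by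
  rw [← AffineMap.linear_injective_iff, ← LinearMap.ker_eq_bot] at hf
  have hker : 1 ≤ Module.finrank k (LinearMap.ker f.linear) :=
    Submodule.one_le_finrank_iff.2 hf
  have hsum := LinearMap.finrank_range_add_finrank_ker f.linear
  rw [Module.finrank_fin_fun] at hsum
  have := LinearMap.finiteDimensional_range f.linear
  rw [← Set.image_univ, Coplanar, ← AffineMap.map_vectorSpan,
    AffineSubspace.vectorSpan_eq_top_of_affineSpan_eq_top k _ _ (AffineSubspace.span_univ k _ _),
    Submodule.map_top, ← Module.finrank_eq_rank]
  exact_mod_cast (by omega : Module.finrank k (LinearMap.range f.linear) ≤ 2)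

end AffineMap

section NoThreeCollinear

variable (k : Type*) {V P : Type*} [DivisionRing k] [AddCommGroup V] [Module k V]
  [AddTorsor V P]

def NoThreeCollinear (s : Set P) : Prop :=
  ∀ x ∈ s, ∀ y ∈ s, ∀ z ∈ s, x ≠ y → x ≠ z → y ≠ z → ¬ Collinear k {x, y, z}

variable {k}

theorem NoThreeCollinear.subset {s t : Set P} (h : NoThreeCollinear k t) (hst : s ⊆ t) :
    NoThreeCollinear k s :=
  fun x hx y hy z hz => h x (hst hx) y (hst hy) z (hst hz)

end NoThreeCollinear

section VectorSpace

variable {k V : Type*} [DivisionRing k] [AddCommGroup V] [Module k V]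

theorem Coplanar.exists_eq_add_smul_add_smul {s : Set V} (hs : Coplanar k s)
    {p₁ p₂ p₃ p : V} (h₁ : p₁ ∈ s) (h₂ : p₂ ∈ s) (h₃ : p₃ ∈ s) (hp : p ∈ s)
    (hnc : ¬ Collinear k {p₁, p₂, p₃}) :
    ∃ a b : k, p = p₁ + a • (p₂ - p₁) + b • (p₃ - p₁) := by
  have := hs.finiteDimensional_vectorSpan
  have hplane : vectorSpan k {p₁, p₂, p₃} = vectorSpan k s := by
    refine Submodule.eq_of_le_of_finrank_le
      (vectorSpan_mono k (by simp [Set.insert_subset_iff, h₁, h₂, h₃])) ?_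
    have hrank := (affineIndependent_iff_not_collinear_set.2 hnc).finrank_vectorSpan
      (Fintype.card_fin 3)
    rw [Matrix.range_cons, Matrix.range_cons, Matrix.range_cons, Matrix.range_empty,
      Set.union_empty, Set.singleton_union, Set.singleton_union] at hrank
    rw [hrank]
    exact hs.finrank_le_two
  have hmem : p - p₁ ∈ vectorSpan k {p₁, p₂, p₃} := hplane ▸ vsub_mem_vectorSpan k hp h₁
  rw [vectorSpan_eq_span_vsub_set_right k (Set.mem_insert p₁ _)] at hmem
  simp only [Set.image_insert_eq, Set.image_singleton, vsub_eq_sub, sub_self,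
    Submodule.span_insert_zero, Submodule.mem_span_pair] at hmem
  obtain ⟨a, b, hab⟩ := hmem
  exact ⟨a, b, by rw [add_assoc, hab]; abel⟩

theorem add_ne_one_of_not_collinear {p p₁ p₂ r : V} {a b : k}
    (hr : r = p + a • (p₁ - p) + b • (p₂ - p)) (hnc : ¬ Collinear k {p₁, p₂, r}) :
    a + b ≠ 1 := by
  intro hab
  have hline : r ∈ line[k, p₁, p₂] := by
    rw [show r = AffineMap.lineMap p₁ p₂ b by
      rw [hr, AffineMap.lineMap_apply_module', eq_sub_of_add_eq hab, sub_smul, one_smul,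
        smul_sub, smul_sub, smul_sub]
      abel]
    exact AffineMap.lineMap_mem_affineSpan_pair b p₁ p₂
  rw [Set.pair_comm, Set.insert_comm] at hnc
  exact hnc (collinear_insert_of_mem_affineSpan_pair hline)

theorem exists_affineMap_fin_three (q q₁ q₂ q₃ : V) : ∃ φ : (Fin 3 → k) →ᵃ[k] V,
    ∀ x, φ x = q + x 0 • (q₁ - q) + x 1 • (q₂ - q) + x 2 • (q₃ - q) := by
  refine ⟨(Fintype.linearCombination k ![q₁ - q, q₂ - q, q₃ - q]).toAffineMap +
    AffineMap.const k _ q, fun x => ?_⟩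
  simp only [AffineMap.coe_add, AffineMap.coe_const, LinearMap.coe_toAffineMap, Pi.add_apply,
    Function.const_apply, Fintype.linearCombination_apply, Fin.sum_univ_three, Matrix.cons_val]
  abel

end VectorSpace

theorem coplanar_iff_det_eq_zero {k : Type*} [Field k] (x₀ x₁ x₂ x₃ : Fin 3 → k) :
    Coplanar k {x₀, x₁, x₂, x₃} ↔ (Matrix.of ![x₁ - x₀, x₂ - x₀, x₃ - x₀]).det = 0 := by
  have hspan : vectorSpan k {x₀, x₁, x₂, x₃} =
      Submodule.span k (Set.range ![x₁ - x₀, x₂ - x₀, x₃ - x₀]) := by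
    rw [vectorSpan_eq_span_vsub_set_right k (Set.mem_insert x₀ _)]
    simp only [Set.image_insert_eq, Set.image_singleton, vsub_eq_sub, sub_self,
      Submodule.span_insert_zero, Matrix.range_cons, Matrix.range_empty, Set.singleton_union,
      Set.union_empty]
  have hle := finrank_range_le_card (R := k) ![x₁ - x₀, x₂ - x₀, x₃ - x₀]
  rw [Coplanar, hspan, ← Module.finrank_eq_rank, Nat.cast_le_ofNat, ← not_iff_not,
    ← ne_eq, ← isUnit_iff_ne_zero, ← Matrix.isUnit_iff_isUnit_det,
    ← Matrix.linearIndependent_rows_iff_isUnit, linearIndependent_iff_card_eq_finrank_span]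
  change ¬ _ ≤ 2 ↔ 3 = Set.finrank k (Set.range ![x₁ - x₀, x₂ - x₀, x₃ - x₀])
  rw [Fintype.card_fin] at hle
  unfold Set.finrank at hle ⊢
  omega

theorem coplanar_black_of_coplanar_white_fin_three {k : Type*} [Field k]
    {a₁ a₂ b₁ b₃ c₂ c₃ α β : k} (ha : a₁ + a₂ ≠ 1) (hb : b₁ + b₃ ≠ 1) (hc : c₂ + c₃ ≠ 1)
    (h₅ : Coplanar k {![0, 1, 0], ![a₁, a₂, 0],
      ![1 + α * (a₁ - 1) + β * (b₁ - 1), α * a₂, β * b₃], ![0, c₂, c₃]})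
    (h₆ : Coplanar k {![0, 0, 1], ![b₁, 0, b₃],
      ![1 + α * (a₁ - 1) + β * (b₁ - 1), α * a₂, β * b₃], ![0, c₂, c₃]})
    (hw : Coplanar k {![1, 0, 0], ![0, 1, 0], ![0, 0, 1],
      ![1 + α * (a₁ - 1) + β * (b₁ - 1), α * a₂, β * b₃]}) :
    Coplanar k {0, ![a₁, a₂, 0], ![b₁, 0, b₃], ![0, c₂, c₃]} := by
  simp only [coplanar_iff_det_eq_zero, Matrix.det_fin_three, Matrix.of_apply, Matrix.cons_val,
    Pi.sub_apply, Pi.zero_apply] at h₅ h₆ hw ⊢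
  -- `h₅, h₆, hw` are affine in `(α, β)`; together they say that `(α, β, 1)` lies in `ker M`.
  let M : Matrix (Fin 3) (Fin 3) k :=
    !![c₃ * (a₁ + a₂ - 1), -(a₁ * b₃ * (c₂ - 1)) - (a₂ - 1) * (b₁ - 1) * c₃, -(c₃ * (a₁ + a₂ - 1));
      a₂ * b₁ * (c₃ - 1) + (a₁ - 1) * (b₃ - 1) * c₂, -(c₂ * (b₁ + b₃ - 1)), c₂ * (b₁ + b₃ - 1);
      a₁ + a₂ - 1, b₁ + b₃ - 1, 0]
  have hM : M.det = 0 := by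
    refine Matrix.exists_mulVec_eq_zero_iff.1 ⟨![α, β, 1], by simp, ?_⟩
    ext i
    fin_cases i <;> simp only [M, Matrix.mulVec, dotProduct, Fin.sum_univ_three, Fin.zero_eta,
      Fin.mk_one, Fin.reduceFinMk, Matrix.of_apply, Matrix.cons_val, Pi.zero_apply]
    exacts [by linear_combination h₅, by linear_combination h₆, by linear_combination hw]
  have hdet : M.det =
      -((a₁ + a₂ - 1) * (b₁ + b₃ - 1) * (c₂ + c₃ - 1)) * (a₁ * b₃ * c₂ + a₂ * b₁ * c₃) := by
    simp only [M, Matrix.det_fin_three, Matrix.of_apply, Matrix.cons_val]; ring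
  have hne : (a₁ + a₂ - 1) * (b₁ + b₃ - 1) * (c₂ + c₃ - 1) ≠ 0 :=
    mul_ne_zero (mul_ne_zero (sub_ne_zero.2 ha) (sub_ne_zero.2 hb)) (sub_ne_zero.2 hc)
  rw [hM, eq_comm, mul_eq_zero, neg_eq_zero] at hdet
  linear_combination -hdet.resolve_left hne

section Cube

variable {k V : Type*} [Field k] [AddCommGroup V] [Module k V]

theorem coplanar_black_of_coplanar_white_of_not_collinear {q q₁ q₂ q₃ q₁₂ q₁₃ q₂₃ q₁₂₃ : V}
    (h₁ : Coplanar k {q, q₁, q₁₂, q₂}) (h₂ : Coplanar k {q, q₂, q₂₃, q₃})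
    (h₃ : Coplanar k {q, q₁, q₁₃, q₃}) (h₄ : Coplanar k {q₁, q₁₂, q₁₂₃, q₁₃})
    (h₅ : Coplanar k {q₂, q₁₂, q₁₂₃, q₂₃}) (h₆ : Coplanar k {q₃, q₁₃, q₁₂₃, q₂₃})
    (n₁₂ : ¬ Collinear k {q, q₁, q₂}) (n₁₃ : ¬ Collinear k {q, q₁, q₃})
    (n₂₃ : ¬ Collinear k {q, q₂, q₃}) (n₁ : ¬ Collinear k {q₁, q₁₂, q₁₃})
    (m₁₂ : ¬ Collinear k {q₁, q₂, q₁₂}) (m₁₃ : ¬ Collinear k {q₁, q₃, q₁₃})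
    (m₂₃ : ¬ Collinear k {q₂, q₃, q₂₃})
    (hall : ¬ Coplanar k {q, q₁, q₂, q₃, q₁₂, q₁₃, q₂₃, q₁₂₃})
    (hwhite : Coplanar k {q₁, q₂, q₃, q₁₂₃}) :
    Coplanar k {q, q₁₂, q₁₃, q₂₃} := by
  obtain ⟨a₁, a₂, ha⟩ := h₁.exists_eq_add_smul_add_smul (p := q₁₂)
    (by simp) (by simp) (by simp) (by simp) n₁₂
  obtain ⟨b₁, b₃, hb⟩ := h₃.exists_eq_add_smul_add_smul (p := q₁₃)
    (by simp) (by simp) (by simp) (by simp) n₁₃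
  obtain ⟨c₂, c₃, hc⟩ := h₂.exists_eq_add_smul_add_smul (p := q₂₃)
    (by simp) (by simp) (by simp) (by simp) n₂₃
  obtain ⟨α, β, hαβ⟩ := h₄.exists_eq_add_smul_add_smul (p := q₁₂₃)
    (by simp) (by simp) (by simp) (by simp) n₁
  obtain ⟨φ, hφ⟩ := exists_affineMap_fin_three (k := k) q q₁ q₂ q₃
  have e₀ : φ 0 = q := by simp [hφ]
  have e₁ : φ ![1, 0, 0] = q₁ := by simp [hφ]
  have e₂ : φ ![0, 1, 0] = q₂ := by simp [hφ]
  have e₃ : φ ![0, 0, 1] = q₃ := by simp [hφ]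
  have e₁₂ : φ ![a₁, a₂, 0] = q₁₂ := by simp [hφ, ha]
  have e₁₃ : φ ![b₁, 0, b₃] = q₁₃ := by simp [hφ, hb]
  have e₂₃ : φ ![0, c₂, c₃] = q₂₃ := by simp [hφ, hc]
  have e₁₂₃ : φ ![1 + α * (a₁ - 1) + β * (b₁ - 1), α * a₂, β * b₃] = q₁₂₃ := by
    rw [hφ, hαβ, ha, hb]
    simp only [Matrix.cons_val]
    module
  have hinj : Function.Injective φ := by
    refine not_not.1 fun hφ' => hall ((φ.coplanar_range_of_not_injective hφ').subset ?_)
    simp only [Set.insert_subset_iff, Set.singleton_subset_iff]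
    exact ⟨⟨_, e₀⟩, ⟨_, e₁⟩, ⟨_, e₂⟩, ⟨_, e₃⟩, ⟨_, e₁₂⟩, ⟨_, e₁₃⟩, ⟨_, e₂₃⟩, ⟨_, e₁₂₃⟩⟩
  have hcoords := coplanar_black_of_coplanar_white_fin_three (α := α) (β := β)
    (add_ne_one_of_not_collinear ha m₁₂) (add_ne_one_of_not_collinear hb m₁₃)
    (add_ne_one_of_not_collinear hc m₂₃)
    ((coplanar_image_iff_of_injective hinj _).1 (by
      simpa only [Set.image_insert_eq, Set.image_singleton, e₂, e₁₂, e₁₂₃, e₂₃] using h₅))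
    ((coplanar_image_iff_of_injective hinj _).1 (by
      simpa only [Set.image_insert_eq, Set.image_singleton, e₃, e₁₃, e₁₂₃, e₂₃] using h₆))
    ((coplanar_image_iff_of_injective hinj _).1 (by
      simpa only [Set.image_insert_eq, Set.image_singleton, e₁, e₂, e₃, e₁₂₃] using hwhite))
  simpa only [Set.image_insert_eq, Set.image_singleton, e₀, e₁₂, e₁₃, e₂₃] using
    hcoords.image φ

theorem coplanar_black_of_coplanar_white {q q₁ q₂ q₃ q₁₂ q₁₃ q₂₃ q₁₂₃ : V}
    (hdist : List.Pairwise (· ≠ ·) [q, q₁, q₂, q₃, q₁₂, q₁₃, q₂₃, q₁₂₃])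
    (h₁ : Coplanar k {q, q₁, q₁₂, q₂}) (h₂ : Coplanar k {q, q₂, q₂₃, q₃})
    (h₃ : Coplanar k {q, q₁, q₁₃, q₃}) (h₄ : Coplanar k {q₁, q₁₂, q₁₂₃, q₁₃})
    (h₅ : Coplanar k {q₂, q₁₂, q₁₂₃, q₂₃}) (h₆ : Coplanar k {q₃, q₁₃, q₁₂₃, q₂₃})
    (hgen : NoThreeCollinear k {q, q₁, q₂, q₃, q₁₂, q₁₃, q₂₃, q₁₂₃})
    (hall : ¬ Coplanar k {q, q₁, q₂, q₃, q₁₂, q₁₃, q₂₃, q₁₂₃})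
    (hwhite : Coplanar k {q₁, q₂, q₃, q₁₂₃}) :
    Coplanar k {q, q₁₂, q₁₃, q₂₃} := by
  simp only [List.pairwise_cons, List.mem_cons, List.not_mem_nil, or_false, forall_eq_or_imp,
    forall_eq] at hdist
  obtain ⟨⟨d01, d02, d03, -⟩, ⟨d12, d13, d14, d15, -⟩, ⟨d23, d24, -, d26, -⟩, ⟨-, d35, d36, -⟩,
    ⟨d45, -⟩, -⟩ := hdist
  exact coplanar_black_of_coplanar_white_of_not_collinear h₁ h₂ h₃ h₄ h₅ h₆
    (hgen _ (by simp) _ (by simp) _ (by simp) d01 d02 d12)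
    (hgen _ (by simp) _ (by simp) _ (by simp) d01 d03 d13)
    (hgen _ (by simp) _ (by simp) _ (by simp) d02 d03 d23)
    (hgen _ (by simp) _ (by simp) _ (by simp) d14 d15 d45)
    (hgen _ (by simp) _ (by simp) _ (by simp) d12 d14 d24)
    (hgen _ (by simp) _ (by simp) _ (by simp) d13 d15 d35)
    (hgen _ (by simp) _ (by simp) _ (by simp) d23 d26 d36)
    hall hwhite

theorem coplanar_black_iff_coplanar_white {q q₁ q₂ q₃ q₁₂ q₁₃ q₂₃ q₁₂₃ : V}
    (hdist : List.Pairwise (· ≠ ·) [q, q₁, q₂, q₃, q₁₂, q₁₃, q₂₃, q₁₂₃])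
    (h₁ : Coplanar k {q, q₁, q₁₂, q₂}) (h₂ : Coplanar k {q, q₂, q₂₃, q₃})
    (h₃ : Coplanar k {q, q₁, q₁₃, q₃}) (h₄ : Coplanar k {q₁, q₁₂, q₁₂₃, q₁₃})
    (h₅ : Coplanar k {q₂, q₁₂, q₁₂₃, q₂₃}) (h₆ : Coplanar k {q₃, q₁₃, q₁₂₃, q₂₃})
    (hgen : NoThreeCollinear k {q, q₁, q₂, q₃, q₁₂, q₁₃, q₂₃, q₁₂₃})
    (hall : ¬ Coplanar k {q, q₁, q₂, q₃, q₁₂, q₁₃, q₂₃, q₁₂₃}) :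
    Coplanar k {q, q₁₂, q₁₃, q₂₃} ↔ Coplanar k {q₁, q₂, q₃, q₁₂₃} := by
  refine ⟨fun hblack => ?_, coplanar_black_of_coplanar_white hdist h₁ h₂ h₃ h₄ h₅ h₆ hgen hall⟩
  -- the central symmetry `q_I ↦ q_{123 - I}` of the cube
  have hwhite := coplanar_black_of_coplanar_white (List.pairwise_reverse.2 (hdist.imp Ne.symm))
    (h₆.subset (by simp [Set.insert_subset_iff])) (h₄.subset (by simp [Set.insert_subset_iff]))
    (h₅.subset (by simp [Set.insert_subset_iff])) (h₂.subset (by simp [Set.insert_subset_iff]))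
    (h₃.subset (by simp [Set.insert_subset_iff])) (h₁.subset (by simp [Set.insert_subset_iff]))
    (hgen.subset (by simp [Set.insert_subset_iff]))
    (fun h => hall (h.subset (by simp [Set.insert_subset_iff])))
    (hblack.subset (by simp [Set.insert_subset_iff]))
  exact hwhite.subset (by simp [Set.insert_subset_iff])

end Cube

section Paraboloid

variable {E : Type*} [NormedAddCommGroup E]

def paraboloidLift (p : E) : E × ℝ := (p, ‖p‖ ^ 2)

theorem paraboloidLift_injective : Function.Injective (paraboloidLift (E := E)) :=
  fun _ _ h => congrArg Prod.fst h

variable [InnerProductSpace ℝ E]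

theorem coplanar_image_paraboloidLift {s : Set E} (h : Concyclic s) :
    Coplanar ℝ (paraboloidLift '' s) := by
  obtain ⟨⟨o, r, hr⟩, hs⟩ := h
  -- on the sphere, `‖p‖ ^ 2` agrees with the affine function `2 ⟪o, p⟫ + r ^ 2 - ‖o‖ ^ 2`
  let ψ : E →ᵃ[ℝ] E × ℝ := (LinearMap.id.prod (2 • innerₛₗ ℝ o)).toAffineMap +
    AffineMap.const ℝ E (0, r ^ 2 - ‖o‖ ^ 2)
  have hψ : ∀ p, ψ p = (p, 2 * inner ℝ o p + (r ^ 2 - ‖o‖ ^ 2)) := fun p => by simp [ψ]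
  have hlift : paraboloidLift '' s = ψ '' s := Set.image_congr fun p hp => by
    have h2 := norm_sub_sq_real p o
    rw [← dist_eq_norm, hr p hp, real_inner_comm] at h2
    rw [hψ, paraboloidLift]
    congr 1
    linarith
  rw [hlift]
  exact hs.image ψ

theorem not_collinear_paraboloidLift {p₁ p₂ p₃ : E} (h : ¬ Collinear ℝ {p₁, p₂, p₃}) :
    ¬ Collinear ℝ {paraboloidLift p₁, paraboloidLift p₂, paraboloidLift p₃} := fun hc => h <| by
  simpa [Set.image_insert_eq, paraboloidLift] using hc.image (LinearMap.fst ℝ E ℝ).toAffineMap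

theorem NoThreeCollinear.image_paraboloidLift {s : Set E} (h : NoThreeCollinear ℝ s) :
    NoThreeCollinear ℝ (paraboloidLift '' s) := by
  rintro _ ⟨x, hx, rfl⟩ _ ⟨y, hy, rfl⟩ _ ⟨z, hz, rfl⟩ hxy hxz hyz
  exact not_collinear_paraboloidLift (h x hx y hy z hz (ne_of_apply_ne _ hxy)
    (ne_of_apply_ne _ hxz) (ne_of_apply_ne _ hyz))

theorem concyclic_of_coplanar_image_paraboloidLift {s : Set E} {p₁ p₂ p₃ : E} (h₁ : p₁ ∈ s)
    (h₂ : p₂ ∈ s) (h₃ : p₃ ∈ s) (hnc : ¬ Collinear ℝ {p₁, p₂, p₃})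
    (h : Coplanar ℝ (paraboloidLift '' s)) : Concyclic s := by
  have hs : Coplanar ℝ s := by
    simpa [Set.image_image, paraboloidLift] using h.image (LinearMap.fst ℝ E ℝ).toAffineMap
  refine ⟨?_, hs⟩
  obtain ⟨o, r, hr⟩ : ∃ o r, ∀ i, dist (![p₁, p₂, p₃] i) o = r :=
    let T : Affine.Simplex ℝ E 2 := ⟨_, affineIndependent_iff_not_collinear_set.2 hnc⟩
    ⟨T.circumcenter, T.circumradius, T.dist_circumcenter_eq_circumradius⟩
  have hsq : ∀ x : E, dist x o ^ 2 = ‖x‖ ^ 2 - 2 * inner ℝ x o + ‖o‖ ^ 2 := fun x => by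
    rw [dist_eq_norm, norm_sub_sq_real]
  have hr₁ := hsq p₁
  have hr₂ := hsq p₂
  have hr₃ := hsq p₃
  rw [show dist p₁ o = r from hr 0] at hr₁
  rw [show dist p₂ o = r from hr 1] at hr₂
  rw [show dist p₃ o = r from hr 2] at hr₃
  refine ⟨o, r, fun t ht => ?_⟩
  obtain ⟨a, b, hab⟩ := h.exists_eq_add_smul_add_smul (Set.mem_image_of_mem _ h₁)
    (Set.mem_image_of_mem _ h₂) (Set.mem_image_of_mem _ h₃) (Set.mem_image_of_mem _ ht)
    (not_collinear_paraboloidLift hnc)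
  have hfst := congrArg Prod.fst hab
  have hsnd := congrArg Prod.snd hab
  simp only [paraboloidLift, Prod.mk_sub_mk, Prod.smul_mk, smul_eq_mul, Prod.mk_add_mk]
    at hfst hsnd
  have hinner := congrArg (inner ℝ · o) hfst
  simp only [inner_add_left, inner_sub_left, real_inner_smul_left] at hinner
  rw [← sq_eq_sq₀ dist_nonneg ((hr 0).symm ▸ dist_nonneg)]
  -- `x ↦ ‖x‖ ^ 2 - 2 ⟪x, o⟫` respects the affine relation of the lifts, and it takes the value
  -- `r ^ 2 - ‖o‖ ^ 2` at `p₁, p₂, p₃`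
  linear_combination hsq t + hsnd - 2 * hinner - (1 - a - b) * hr₁ - a * hr₂ - b * hr₃

theorem concyclic_iff_coplanar_image_paraboloidLift {s : Set E} {p₁ p₂ p₃ : E} (h₁ : p₁ ∈ s)
    (h₂ : p₂ ∈ s) (h₃ : p₃ ∈ s) (hnc : ¬ Collinear ℝ {p₁, p₂, p₃}) :
    Concyclic s ↔ Coplanar ℝ (paraboloidLift '' s) :=
  ⟨coplanar_image_paraboloidLift,
    concyclic_of_coplanar_image_paraboloidLift h₁ h₂ h₃ hnc⟩

end Paraboloid

theorem isothermic_hexahedron_general (N : ℕ)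
    (f f₁ f₂ f₃ f₁₂ f₁₃ f₂₃ f₁₂₃ : EuclideanSpace ℝ (Fin N))
    (hdist : List.Pairwise (· ≠ ·) [f, f₁, f₂, f₃, f₁₂, f₁₃, f₂₃, f₁₂₃])
    (hface1 : Concyclic ({f, f₁, f₁₂, f₂} : Set (EuclideanSpace ℝ (Fin N))))
    (hface2 : Concyclic ({f, f₂, f₂₃, f₃} : Set (EuclideanSpace ℝ (Fin N))))
    (hface3 : Concyclic ({f, f₁, f₁₃, f₃} : Set (EuclideanSpace ℝ (Fin N))))
    (hface4 : Concyclic ({f₁, f₁₂, f₁₂₃, f₁₃} : Set (EuclideanSpace ℝ (Fin N))))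
    (hface5 : Concyclic ({f₂, f₁₂, f₁₂₃, f₂₃} : Set (EuclideanSpace ℝ (Fin N))))
    (hface6 : Concyclic ({f₃, f₁₃, f₁₂₃, f₂₃} : Set (EuclideanSpace ℝ (Fin N))))
    (hno3 : ∀ x ∈ ({f, f₁, f₂, f₃, f₁₂, f₁₃, f₂₃, f₁₂₃} : Set (EuclideanSpace ℝ (Fin N))),
      ∀ y ∈ ({f, f₁, f₂, f₃, f₁₂, f₁₃, f₂₃, f₁₂₃} : Set (EuclideanSpace ℝ (Fin N))),
      ∀ z ∈ ({f, f₁, f₂, f₃, f₁₂, f₁₃, f₂₃, f₁₂₃} : Set (EuclideanSpace ℝ (Fin N))),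
        x ≠ y → x ≠ z → y ≠ z →
          ¬ Collinear ℝ ({x, y, z} : Set (EuclideanSpace ℝ (Fin N))))
    (hnotall : ¬ Concyclic
      ({f, f₁, f₂, f₃, f₁₂, f₁₃, f₂₃, f₁₂₃} : Set (EuclideanSpace ℝ (Fin N)))) :
    Concyclic ({f, f₁₂, f₁₃, f₂₃} : Set (EuclideanSpace ℝ (Fin N))) ↔
      Concyclic ({f₁, f₂, f₃, f₁₂₃} : Set (EuclideanSpace ℝ (Fin N))) := by
  have hd := hdist
  simp only [List.pairwise_cons, List.mem_cons, List.not_mem_nil, or_false, forall_eq_or_imp,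
    forall_eq] at hd
  obtain ⟨⟨-, -, -, d04, d05, -⟩, ⟨d12, d13, -⟩, ⟨d23, -⟩, -, ⟨d45, -⟩, -⟩ := hd
  have nblack := hno3 f (by simp) f₁₂ (by simp) f₁₃ (by simp) d04 d05 d45
  have nwhite := hno3 f₁ (by simp) f₂ (by simp) f₃ (by simp) d12 d13 d23
  rw [concyclic_iff_coplanar_image_paraboloidLift (by simp) (by simp) (by simp) nblack,
    concyclic_iff_coplanar_image_paraboloidLift (by simp) (by simp) (by simp) nwhite]
  have hgen :=
    NoThreeCollinear.image_paraboloidLift (s := {f, f₁, f₂, f₃, f₁₂, f₁₃, f₂₃, f₁₂₃}) hno3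
  have hall : ¬ Coplanar ℝ (paraboloidLift '' {f, f₁, f₂, f₃, f₁₂, f₁₃, f₂₃, f₁₂₃}) := fun h =>
    hnotall (concyclic_of_coplanar_image_paraboloidLift (by simp) (by simp) (by simp) nwhite h)
  have l₁ := coplanar_image_paraboloidLift hface1
  have l₂ := coplanar_image_paraboloidLift hface2
  have l₃ := coplanar_image_paraboloidLift hface3
  have l₄ := coplanar_image_paraboloidLift hface4
  have l₅ := coplanar_image_paraboloidLift hface5
  have l₆ := coplanar_image_paraboloidLift hface6
  simp only [Set.image_insert_eq, Set.image_singleton] at hgen hall l₁ l₂ l₃ l₄ l₅ l₆ ⊢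
  exact coplanar_black_iff_coplanar_white
    (hdist.map paraboloidLift fun _ _ => paraboloidLift_injective.ne) l₁ l₂ l₃ l₄ l₅ l₆ hgen hall

/-- Multidimensional discrete isothermic nets: hexahedron characterization.
For an elementary hexahedron of a circular net (all six faces concyclic,
vertices in general position), the four black vertices `f, f₁₂, f₁₃, f₂₃`
are concyclic iff the four white vertices `f₁, f₂, f₃, f₁₂₃` are concyclic. -/
theorem isothermic_hexahedron (N : ℕ) (hN : 3 ≤ N)
    (f f₁ f₂ f₃ f₁₂ f₁₃ f₂₃ f₁₂₃ : EuclideanSpace ℝ (Fin N))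
    (hdist : List.Pairwise (· ≠ ·) [f, f₁, f₂, f₃, f₁₂, f₁₃, f₂₃, f₁₂₃])
    (hface1 : Concyclic ({f, f₁, f₁₂, f₂} : Set (EuclideanSpace ℝ (Fin N))))
    (hface2 : Concyclic ({f, f₂, f₂₃, f₃} : Set (EuclideanSpace ℝ (Fin N))))
    (hface3 : Concyclic ({f, f₁, f₁₃, f₃} : Set (EuclideanSpace ℝ (Fin N))))
    (hface4 : Concyclic ({f₁, f₁₂, f₁₂₃, f₁₃} : Set (EuclideanSpace ℝ (Fin N))))
    (hface5 : Concyclic ({f₂, f₁₂, f₁₂₃, f₂₃} : Set (EuclideanSpace ℝ (Fin N))))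
    (hface6 : Concyclic ({f₃, f₁₃, f₁₂₃, f₂₃} : Set (EuclideanSpace ℝ (Fin N))))
    (hno3 : ∀ x ∈ ({f, f₁, f₂, f₃, f₁₂, f₁₃, f₂₃, f₁₂₃} : Set (EuclideanSpace ℝ (Fin N))),
      ∀ y ∈ ({f, f₁, f₂, f₃, f₁₂, f₁₃, f₂₃, f₁₂₃} : Set (EuclideanSpace ℝ (Fin N))),
      ∀ z ∈ ({f, f₁, f₂, f₃, f₁₂, f₁₃, f₂₃, f₁₂₃} : Set (EuclideanSpace ℝ (Fin N))),
        x ≠ y → x ≠ z → y ≠ z →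
          ¬ Collinear ℝ ({x, y, z} : Set (EuclideanSpace ℝ (Fin N))))
    (hnotall : ¬ Concyclic
      ({f, f₁, f₂, f₃, f₁₂, f₁₃, f₂₃, f₁₂₃} : Set (EuclideanSpace ℝ (Fin N)))) :
    Concyclic ({f, f₁₂, f₁₃, f₂₃} : Set (EuclideanSpace ℝ (Fin N))) ↔
      Concyclic ({f₁, f₂, f₃, f₁₂₃} : Set (EuclideanSpace ℝ (Fin N))) :=
  isothermic_hexahedron_general N f f₁ f₂ f₃ f₁₂ f₁₃ f₂₃ f₁₂₃ hdist hface1 hface2 hface3 hface4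
    hface5 hface6 hno3 hnotall
end

section
/- Discrete metric of a circular quadrilateral (key identity in Theorem 'Discrete metric for discrete isothermic nets'): Let E be a real inner product space, and let f, f₁, f₁₂, f₂ ∈ E be four pairwise distinct concyclic points (lying on a common circle). Suppose the diagonals intersect: there is a point M, distinct from the four vertices, lying on the line through f and f₁₂ and on the line through f₁ and f₂; let ρ, σ be the nonzero real numbers with f₁₂ − M = ρ(f − M) and f₂ − M = σ(f₁ − M) (the ratios of directed lengths ρ = l(M,f₁₂)/l(M,f) and σ = l(M,f₂)/l(M,f₁)). Then ρσ·‖f₁ − f‖² = ‖f₁₂ − f₂‖² and (ρ/σ)·‖f₂ − f‖² = ‖f₁₂ − f₁‖². -/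
/-!
Both diagonals pass through `M`, so the signed intersecting chords theorem computes the power of
`M` with respect to the circle in three ways: `ρ‖f - M‖² = σ‖f₁ - M‖² = σ⁻¹‖f₂ - M‖²`.
For vectors `u, v` with `a‖u‖² = b‖v‖²` one has `‖a • u - b • v‖² = a b ‖u - v‖²`, which applied
to the pairs `(f - M, f₁ - M)` and `(f - M, f₂ - M)` gives the two identities.
-/

open RealInnerProductSpace

theorem norm_smul_sub_smul_sq_of_mul_norm_sq_eq {F : Type*} [NormedAddCommGroup F]
    [InnerProductSpace ℝ F] {u v : F} {a b : ℝ} (h : a * ‖u‖ ^ 2 = b * ‖v‖ ^ 2) :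
    ‖a • u - b • v‖ ^ 2 = a * b * ‖u - v‖ ^ 2 := by
  rw [norm_sub_sq_real, norm_sub_sq_real, norm_smul, norm_smul, real_inner_smul_left,
    real_inner_smul_right]
  simp only [mul_pow, Real.norm_eq_abs, sq_abs]
  linear_combination (a - b) * h

namespace EuclideanGeometry.Sphere

variable {V P : Type*} [NormedAddCommGroup V] [InnerProductSpace ℝ V] [MetricSpace P]
  [NormedAddTorsor V P]

/-- Signed form of `mul_dist_eq_abs_power`. -/
theorem mul_dist_sq_eq_power {s : Sphere P} {p q m : P} {k : ℝ} (hp : p ∈ s) (hq : q ∈ s)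
    (hpq : p ≠ q) (h : q -ᵥ m = k • (p -ᵥ m)) : k * dist p m ^ 2 = s.power m := by
  have hk : k ≠ 1 := by
    rintro rfl
    exact hpq (vsub_left_cancel (h.trans (one_smul ℝ _))).symm
  have hp' : ‖(p -ᵥ m) + (m -ᵥ s.center)‖ ^ 2 = s.radius ^ 2 := by
    rw [vsub_add_vsub_cancel, ← dist_eq_norm_vsub V, mem_sphere.mp hp]
  have hq' : ‖k • (p -ᵥ m) + (m -ᵥ s.center)‖ ^ 2 = s.radius ^ 2 := by
    rw [← h, vsub_add_vsub_cancel, ← dist_eq_norm_vsub V, mem_sphere.mp hq]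
  rw [norm_add_sq_real] at hp' hq'
  rw [norm_smul, real_inner_smul_left, mul_pow, Real.norm_eq_abs, sq_abs] at hq'
  have hchord : (k + 1) * ‖p -ᵥ m‖ ^ 2 + 2 * ⟪p -ᵥ m, m -ᵥ s.center⟫ = 0 :=
    (mul_eq_zero.mp (by linear_combination hq' - hp' : (k - 1) * _ = 0)).resolve_left
      (sub_ne_zero.mpr hk)
  rw [power, dist_eq_norm_vsub V, dist_eq_norm_vsub V]
  linear_combination hchord - hp'

end EuclideanGeometry.Sphere

theorem circular_quadrilateral_metric_identity_general
    {E : Type*} [NormedAddCommGroup E] [InnerProductSpace ℝ E]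
    (f f₁ f₁₂ f₂ M : E)
    (hd2 : f ≠ f₁₂) (hd5 : f₁ ≠ f₂)
    (hcirc : EuclideanGeometry.Concyclic ({f, f₁, f₁₂, f₂} : Set E))
    (ρ σ : ℝ) (hσ0 : σ ≠ 0)
    (hρ : f₁₂ - M = ρ • (f - M)) (hσ : f₂ - M = σ • (f₁ - M)) :
    ρ * σ * ‖f₁ - f‖ ^ 2 = ‖f₁₂ - f₂‖ ^ 2 ∧
      (ρ / σ) * ‖f₂ - f‖ ^ 2 = ‖f₁₂ - f₁‖ ^ 2 := by
  obtain ⟨c, r, hcr⟩ := hcirc.1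
  let s : EuclideanGeometry.Sphere E := ⟨c, r⟩
  have hmem : ∀ p ∈ ({f, f₁, f₁₂, f₂} : Set E), p ∈ s := hcr
  have hσ' : f₁ - M = σ⁻¹ • (f₂ - M) := by rw [hσ, inv_smul_smul₀ hσ0]
  have hpow : ∀ {p q : E} {k : ℝ}, p ∈ s → q ∈ s → p ≠ q → q - M = k • (p - M) →
      k * ‖p - M‖ ^ 2 = s.power M := fun hp hq hpq h => by
    rw [← dist_eq_norm, ← s.mul_dist_sq_eq_power hp hq hpq h]
  have hf := hpow (hmem f (by simp)) (hmem f₁₂ (by simp)) hd2 hρ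
  have hf₁ := hpow (hmem f₁ (by simp)) (hmem f₂ (by simp)) hd5 hσ
  have hf₂ := hpow (hmem f₂ (by simp)) (hmem f₁ (by simp)) hd5.symm hσ'
  constructor
  · rw [← sub_sub_sub_cancel_right f₁₂ f₂ M, hρ, hσ,
      norm_smul_sub_smul_sq_of_mul_norm_sq_eq (hf.trans hf₁.symm),
      sub_sub_sub_cancel_right, norm_sub_rev]
  · rw [← sub_sub_sub_cancel_right f₁₂ f₁ M, hρ, hσ',
      norm_smul_sub_smul_sq_of_mul_norm_sq_eq (hf.trans hf₂.symm),
      sub_sub_sub_cancel_right, norm_sub_rev, div_eq_mul_inv]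

/-- Discrete metric identity for a circular quadrilateral: if the diagonals
of the concyclic quadrilateral `(f, f₁, f₁₂, f₂)` intersect at `M`, dividing
them in the ratios `ρ = l(M,f₁₂)/l(M,f)` and `σ = l(M,f₂)/l(M,f₁)`, then
`ρσ‖f₁ − f‖² = ‖f₁₂ − f₂‖²` and `(ρ/σ)‖f₂ − f‖² = ‖f₁₂ − f₁‖²`. -/
theorem circular_quadrilateral_metric_identity
    {E : Type*} [NormedAddCommGroup E] [InnerProductSpace ℝ E]
    (f f₁ f₁₂ f₂ M : E)
    (hd1 : f ≠ f₁) (hd2 : f ≠ f₁₂) (hd3 : f ≠ f₂)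
    (hd4 : f₁ ≠ f₁₂) (hd5 : f₁ ≠ f₂) (hd6 : f₁₂ ≠ f₂)
    (hcirc : EuclideanGeometry.Concyclic ({f, f₁, f₁₂, f₂} : Set E))
    (hM : M ≠ f ∧ M ≠ f₁ ∧ M ≠ f₁₂ ∧ M ≠ f₂)
    (ρ σ : ℝ) (hρ0 : ρ ≠ 0) (hσ0 : σ ≠ 0)
    (hρ : f₁₂ - M = ρ • (f - M)) (hσ : f₂ - M = σ • (f₁ - M)) :
    ρ * σ * ‖f₁ - f‖ ^ 2 = ‖f₁₂ - f₂‖ ^ 2 ∧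
      (ρ / σ) * ‖f₂ - f‖ ^ 2 = ‖f₁₂ - f₁‖ ^ 2 :=
  circular_quadrilateral_metric_identity_general f f₁ f₁₂ f₂ M hd2 hd5 hcirc ρ σ hσ0 hρ hσ
end

section
/- Closedness of the Christoffel one-form is equivalent to factorized cross-ratios (Theorem 'Dual discrete isothermic net', converse part, planar case): Let f, f₁, f₂, f₁₂ ∈ ℂ be such that f₁ ≠ f, f₂ ≠ f, f₁₂ ≠ f₁, f₁₂ ≠ f₂, and f₁₂ − f₁ − f₂ + f ≠ 0, and let α₁, α₂ ∈ ℂ be nonzero. Then the closedness identity α₁/(f₁ − f) − α₁/(f₁₂ − f₂) = α₂/(f₂ − f) − α₂/(f₁₂ − f₁) holds if and only if the cross-ratio satisfies q(f, f₁, f₁₂, f₂) := ((f − f₁)(f₁₂ − f₂)) / ((f₁ − f₁₂)(f₂ − f)) = α₁/α₂. -/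
/-- Closedness of the Christoffel one-form on a quadrilateral in `ℂ` is
equivalent to the factorized cross-ratio condition
`q(f, f₁, f₁₂, f₂) = α₁/α₂`. -/
theorem christoffel_closedness_iff_cross_ratio
    (f f₁ f₂ f₁₂ : ℂ) (α₁ α₂ : ℂ)
    (h1 : f₁ ≠ f) (h2 : f₂ ≠ f) (h3 : f₁₂ ≠ f₁) (h4 : f₁₂ ≠ f₂)
    (h5 : f₁₂ - f₁ - f₂ + f ≠ 0) (hα₁ : α₁ ≠ 0) (hα₂ : α₂ ≠ 0) :
    α₁ / (f₁ - f) - α₁ / (f₁₂ - f₂) = α₂ / (f₂ - f) - α₂ / (f₁₂ - f₁) ↔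
      ((f - f₁) * (f₁₂ - f₂)) / ((f₁ - f₁₂) * (f₂ - f)) = α₁ / α₂ := by
  have d1 : f₁ - f ≠ 0 := sub_ne_zero.mpr h1
  have d2 : f₂ - f ≠ 0 := sub_ne_zero.mpr h2
  have d3 : f₁₂ - f₁ ≠ 0 := sub_ne_zero.mpr h3
  have d4 : f₁₂ - f₂ ≠ 0 := sub_ne_zero.mpr h4
  have d3' : f₁ - f₁₂ ≠ 0 := sub_ne_zero.mpr (Ne.symm h3)
  have key : (α₁ / (f₁ - f) - α₁ / (f₁₂ - f₂) = α₂ / (f₂ - f) - α₂ / (f₁₂ - f₁))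
      ↔ α₁ * ((f₂ - f) * (f₁₂ - f₁)) = α₂ * ((f₁ - f) * (f₁₂ - f₂)) := by
    constructor
    · intro h
      field_simp at h
      apply mul_left_cancel₀ h5
      linear_combination h
    · intro h
      field_simp
      linear_combination (f₁₂ - f₁ - f₂ + f) * h
  rw [key, div_eq_div_iff (mul_ne_zero d3' d2) hα₂]
  constructor <;> intro h <;> linear_combination h
end

section
/- Three-leg form of the cross-ratio equation in an associative algebra (Corollary, diagonal formulas for dual discrete isothermic nets): Let A be an associative unital ring, let f, fᵢ, f_j, f_{ij} ∈ A be such that fᵢ − f, f_j − f, and f_{ij} − f are invertible in A, and let αᵢ, α_j be central elements of A. If the cross-ratio equation αᵢ·(f_{ij} − fᵢ)·(fᵢ − f)⁻¹ = α_j·(f_{ij} − f_j)·(f_j − f)⁻¹ holds, then the three-leg form (αᵢ − α_j)·(f_{ij} − f)⁻¹ = αᵢ·(fᵢ − f)⁻¹ − α_j·(f_j − f)⁻¹ holds; conversely, if additionally f_{ij} − fᵢ and f_{ij} − f_j make the first equation meaningful, the three-leg form implies the cross-ratio equation. -/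
/-- Three-leg form of the cross-ratio equation in an associative unital ring:
for central `αᵢ, α_j` and invertible `fᵢ − f`, `f_j − f`, `f_{ij} − f`, the
cross-ratio equation
`αᵢ (f_{ij} − fᵢ)(fᵢ − f)⁻¹ = α_j (f_{ij} − f_j)(f_j − f)⁻¹` is equivalent to
the three-leg form
`(αᵢ − α_j)(f_{ij} − f)⁻¹ = αᵢ (fᵢ − f)⁻¹ − α_j (f_j − f)⁻¹`. -/
theorem three_leg_form {A : Type*} [Ring A]
    (f fi fj fij αi αj : A)
    (hi : IsUnit (fi - f)) (hj : IsUnit (fj - f)) (hij : IsUnit (fij - f))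
    (hci : ∀ x : A, αi * x = x * αi) (hcj : ∀ x : A, αj * x = x * αj) :
    αi * ((fij - fi) * Ring.inverse (fi - f)) =
        αj * ((fij - fj) * Ring.inverse (fj - f)) ↔
      (αi - αj) * Ring.inverse (fij - f) =
        αi * Ring.inverse (fi - f) - αj * Ring.inverse (fj - f) := by
  have ha := Ring.mul_inverse_cancel _ hi
  have hb := Ring.mul_inverse_cancel _ hj
  have hc := Ring.mul_inverse_cancel _ hij
  have hc' : ∀ x : A, (αi - αj) * x = x * (αi - αj) := fun x => by
    rw [sub_mul, mul_sub, hci, hcj]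
  have ei : (fij - fi) * Ring.inverse (fi - f) =
      (fij - f) * Ring.inverse (fi - f) - 1 := by
    rw [← ha, ← sub_mul]; congr 1; abel
  have ej : (fij - fj) * Ring.inverse (fj - f) =
      (fij - f) * Ring.inverse (fj - f) - 1 := by
    rw [← hb, ← sub_mul]; congr 1; abel
  rw [ei, ej, mul_sub, mul_sub, mul_one, mul_one]
  conv_rhs => rw [← hij.mul_right_inj, mul_sub, ← mul_assoc, ← hc', mul_assoc,
    hc, mul_one, ← mul_assoc, ← hci, mul_assoc, ← mul_assoc (fij - f), ← hcj,
    mul_assoc]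
  rw [sub_eq_sub_iff_sub_eq_sub]
  exact eq_comm
end

section
/- Origin of the edge labelling for factorized cross-ratios (Theorem 'Origin of the edge labelling for factorized cross-ratios', planar case): Let f, f₁, f₁₂, f₂ ∈ ℂ be four pairwise distinct concyclic points (lying on a common circle in ℂ ≅ ℝ²) whose diagonals intersect: there is a point M ∈ ℂ, distinct from the four vertices, lying on the real line through f and f₁₂ and on the real line through f₁ and f₂; let ρ, σ be the nonzero real numbers with f₁₂ − M = ρ(f − M) and f₂ − M = σ(f₁ − M). Then the complex cross-ratio satisfies ((f − f₁)(f₁₂ − f₂)) / ((f₁ − f₁₂)(f₂ − f)) = σ·|f₁ − f|²/|f₂ − f|². In particular, if s, s₁, s₂, s₁₂ are nonzero reals with ρ = s₁₂/s and σ = s₂/s₁, and α₁ = |f₁ − f|²/(s·s₁), α₂ = |f₂ − f|²/(s·s₂), then this cross-ratio equals α₁/α₂. -/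
/-!
Both diagonals are chords of the circle through `M`, so by the signed intersecting chords theorem
`ρ ‖f - M‖² = σ ‖f₁ - M‖²`, both sides being the power of `M`. Writing `a = f - M`, `b = f₁ - M`
and `‖z‖² = z z̄`, the cross-ratio formula becomes a polynomial identity in `a, b, ā, b̄` modulo
this relation. The second part is then arithmetic in `ℝ`.
-/

open EuclideanGeometry ComplexConjugate

/-- Signed form of `EuclideanGeometry.Sphere.mul_dist_eq_abs_power`. -/
theorem EuclideanGeometry.Sphere.mul_dist_sq_eq_power_s19 {V P : Type*} [NormedAddCommGroup V]
    [InnerProductSpace ℝ V] [MetricSpace P] [NormedAddTorsor V P] {s : Sphere P} {p z w : P}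
    {t : ℝ} (hz : z ∈ s) (hw : w ∈ s) (hzw : z ≠ w) (ht : w -ᵥ p = t • (z -ᵥ p)) :
    t * dist z p ^ 2 = s.power p := by
  rw [Sphere.power, dist_eq_norm_vsub V, dist_eq_norm_vsub V]
  set u := z -ᵥ p
  set v := p -ᵥ s.center
  have hz' : ‖u + v‖ ^ 2 = s.radius ^ 2 := by
    rw [vsub_add_vsub_cancel, ← dist_eq_norm_vsub V, mem_sphere.mp hz]
  have hw' : ‖t • u + v‖ ^ 2 = s.radius ^ 2 := by
    rw [← ht, vsub_add_vsub_cancel, ← dist_eq_norm_vsub V, mem_sphere.mp hw]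
  have ht1 : t - 1 ≠ 0 := by
    refine sub_ne_zero.mpr fun h => hzw ?_
    rw [h, one_smul] at ht
    exact (vsub_left_cancel ht).symm
  rw [norm_add_sq_real] at hz' hw'
  rw [norm_smul, real_inner_smul_left, mul_pow, Real.norm_eq_abs, sq_abs] at hw'
  have hinner : 2 * inner ℝ u v = -((t + 1) * ‖u‖ ^ 2) :=
    mul_left_cancel₀ ht1 (by linear_combination hw' - hz')
  linear_combination hinner - hz'

noncomputable def crossRatio (a b c d : ℂ) : ℂ := (a - b) * (c - d) / ((b - c) * (d - a))

theorem crossRatio_eq_of_intersecting_chords {f f₁ f₁₂ f₂ M : ℂ} {ρ σ : ℝ}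
    (hρ : f₁₂ - M = ρ * (f - M)) (hσ : f₂ - M = σ * (f₁ - M))
    (hpow : ρ * ‖f - M‖ ^ 2 = σ * ‖f₁ - M‖ ^ 2) (h₁ : f₁ ≠ f₁₂) (h₂ : f₂ ≠ f) :
    crossRatio f f₁ f₁₂ f₂ = σ * ‖f₁ - f‖ ^ 2 / ‖f₂ - f‖ ^ 2 := by
  set a := f - M
  set b := f₁ - M
  have hpowC : (ρ : ℂ) * (a * conj a) = σ * (b * conj b) := by
    simp only [Complex.mul_conj']
    exact_mod_cast hpow
  rw [crossRatio, ← Complex.mul_conj', ← Complex.mul_conj', div_eq_div_iff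
    (mul_ne_zero (sub_ne_zero.mpr h₁) (sub_ne_zero.mpr h₂))
    (mul_ne_zero (sub_ne_zero.mpr h₂) ((map_ne_zero _).mpr (sub_ne_zero.mpr h₂)))]
  have e1 : f - f₁ = a - b := by ring
  have e2 : f₁₂ - f₂ = ρ * a - σ * b := by linear_combination hρ - hσ
  have e3 : f₁ - f₁₂ = b - ρ * a := by linear_combination -hρ
  have e4 : f₂ - f = σ * b - a := by linear_combination hσ
  have e5 : f₁ - f = b - a := by ring
  rw [e1, e2, e3, e4, e5]
  simp only [map_sub, map_mul, Complex.conj_ofReal]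
  -- after cancelling `(a - b) (σ b - a)`, the two sides differ by `(σ - 1) (ρ ‖a‖² - σ ‖b‖²)`
  linear_combination ((a - b) * (σ * b - a) * (σ - 1)) * hpowC

theorem cross_ratio_from_discrete_metric_general
    (f f₁ f₁₂ f₂ M : ℂ)
    (hd2 : f ≠ f₁₂) (hd3 : f ≠ f₂)
    (hd4 : f₁ ≠ f₁₂) (hd5 : f₁ ≠ f₂)
    (hcirc : ∃ (c : ℂ) (r : ℝ), ‖f - c‖ = r ∧ ‖f₁ - c‖ = r ∧
      ‖f₁₂ - c‖ = r ∧ ‖f₂ - c‖ = r)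
    (ρ σ : ℝ)
    (hρ : f₁₂ - M = (ρ : ℂ) * (f - M)) (hσ : f₂ - M = (σ : ℂ) * (f₁ - M)) :
    ((f - f₁) * (f₁₂ - f₂)) / ((f₁ - f₁₂) * (f₂ - f)) =
        (σ : ℂ) * (‖f₁ - f‖ : ℂ) ^ 2 / (‖f₂ - f‖ : ℂ) ^ 2 ∧
      ∀ s s₁ s₂ s₁₂ α₁ α₂ : ℝ, s ≠ 0 → s₁ ≠ 0 → s₂ ≠ 0 → s₁₂ ≠ 0 →
        ρ = s₁₂ / s → σ = s₂ / s₁ →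
        α₁ = ‖f₁ - f‖ ^ 2 / (s * s₁) → α₂ = ‖f₂ - f‖ ^ 2 / (s * s₂) →
        ((f - f₁) * (f₁₂ - f₂)) / ((f₁ - f₁₂) * (f₂ - f)) = ((α₁ / α₂ : ℝ) : ℂ) := by
  obtain ⟨c, r, h, h₁, h₁₂, h₂⟩ := hcirc
  have mem (z : ℂ) (hz : ‖z - c‖ = r) : z ∈ (⟨c, r⟩ : Sphere ℂ) := by
    rwa [mem_sphere, Complex.dist_eq]
  have hchords : ρ * ‖f - M‖ ^ 2 = σ * ‖f₁ - M‖ ^ 2 := by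
    simp only [← Complex.dist_eq]
    rw [Sphere.mul_dist_sq_eq_power_s19 (mem f h) (mem f₁₂ h₁₂) hd2 (by rwa [Complex.real_smul]),
      Sphere.mul_dist_sq_eq_power_s19 (mem f₁ h₁) (mem f₂ h₂) hd5 (by rwa [Complex.real_smul])]
  have hq : crossRatio f f₁ f₁₂ f₂ = σ * ‖f₁ - f‖ ^ 2 / ‖f₂ - f‖ ^ 2 :=
    crossRatio_eq_of_intersecting_chords hρ hσ hchords hd4 hd3.symm
  rw [crossRatio] at hq
  refine ⟨hq, fun s s₁ s₂ s₁₂ α₁ α₂ hs _ _ _ _ hσs hα₁ hα₂ => ?_⟩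
  rw [hq]
  suffices σ * ‖f₁ - f‖ ^ 2 / ‖f₂ - f‖ ^ 2 = α₁ / α₂ by exact_mod_cast this
  rw [hσs, hα₁, hα₂]
  field_simp

/-- Origin of the edge labelling for factorized cross-ratios (planar case):
for a concyclic quadrilateral `(f, f₁, f₁₂, f₂)` in `ℂ` whose diagonals
intersect at `M` with real ratios `ρ = l(M,f₁₂)/l(M,f)`,
`σ = l(M,f₂)/l(M,f₁)`, the complex cross-ratio equals
`σ ‖f₁ − f‖² / ‖f₂ − f‖²`; in particular, with `ρ = s₁₂/s`, `σ = s₂/s₁` and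
`α₁ = ‖f₁ − f‖²/(s s₁)`, `α₂ = ‖f₂ − f‖²/(s s₂)`, it equals `α₁/α₂`. -/
theorem cross_ratio_from_discrete_metric
    (f f₁ f₁₂ f₂ M : ℂ)
    (hd1 : f ≠ f₁) (hd2 : f ≠ f₁₂) (hd3 : f ≠ f₂)
    (hd4 : f₁ ≠ f₁₂) (hd5 : f₁ ≠ f₂) (hd6 : f₁₂ ≠ f₂)
    (hcirc : ∃ (c : ℂ) (r : ℝ), ‖f - c‖ = r ∧ ‖f₁ - c‖ = r ∧
      ‖f₁₂ - c‖ = r ∧ ‖f₂ - c‖ = r)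
    (hM : M ≠ f ∧ M ≠ f₁ ∧ M ≠ f₁₂ ∧ M ≠ f₂)
    (ρ σ : ℝ) (hρ0 : ρ ≠ 0) (hσ0 : σ ≠ 0)
    (hρ : f₁₂ - M = (ρ : ℂ) * (f - M)) (hσ : f₂ - M = (σ : ℂ) * (f₁ - M)) :
    ((f - f₁) * (f₁₂ - f₂)) / ((f₁ - f₁₂) * (f₂ - f)) =
        (σ : ℂ) * (‖f₁ - f‖ : ℂ) ^ 2 / (‖f₂ - f‖ : ℂ) ^ 2 ∧
      ∀ s s₁ s₂ s₁₂ α₁ α₂ : ℝ, s ≠ 0 → s₁ ≠ 0 → s₂ ≠ 0 → s₁₂ ≠ 0 →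
        ρ = s₁₂ / s → σ = s₂ / s₁ →
        α₁ = ‖f₁ - f‖ ^ 2 / (s * s₁) → α₂ = ‖f₂ - f‖ ^ 2 / (s * s₂) →
        ((f - f₁) * (f₁₂ - f₂)) / ((f₁ - f₁₂) * (f₂ - f)) = ((α₁ / α₂ : ℝ) : ℂ) :=
  cross_ratio_from_discrete_metric_general f f₁ f₁₂ f₂ M hd2 hd3 hd4 hd5 hcirc ρ σ hρ hσ
end
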